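/- arXiv:1311.3072 — 13 statements merged into one kernel-verified Lean document; each statement's English description precedes it below -/
import Mathlib

section
/- Let S_X Y = g(X,Y)ξ − g(ξ,Y)X + ε g(X,JY)Jξ − ε g(ξ,JY)JX (linear type with ζ = 0). Then for all X, Y, Z ∈ V: R^S_{XY}Z = g(ξ,ξ)·{g(Y,Z)X − g(X,Z)Y + ε g(Y,JZ)JX − ε g(X,JZ)JY} − 2ε g(X,JY)·{g(ξ,JZ)ξ + g(ξ,Z)Jξ}. -/
/-!
Since `J² = ε` and `g(J·, J·) = -ε g`, the endomorphism `J` is skew-adjoint for `g`; with the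
symmetry of `g` this gives `g(ξ, Jξ) = 0`. Once every value of `g` is brought to a normal form
by these two rules and `J²` is replaced by `ε`, both sides of the curvature identity are the same
combination of `ξ, X, Y, Jξ, JX, JY`, with coefficients that agree as polynomials in `ε` modulo
`ε² = 1`.
-/

section LinearType

variable {K V : Type*} [Field K] [AddCommGroup V] [Module K V]
  {ε : K} {g : LinearMap.BilinForm K V} {J : V →ₗ[K] V}

theorem isSkewAdjoint_of_sq_eq_smul (hε : ε ≠ 0) (hJ2 : ∀ X, J (J X) = ε • X)
    (hgJ : ∀ X Y, g (J X) (J Y) = -ε * g X Y) : LinearMap.IsSkewAdjoint g J := by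
  intro X Y
  have h := hgJ X (J Y)
  rw [hJ2, map_smul, smul_eq_mul, neg_mul, ← mul_neg] at h
  simpa using mul_left_cancel₀ hε h

theorem LinearMap.IsSkewAdjoint.apply_apply_self_eq_zero [NeZero (2 : K)]
    (hgsymm : ∀ X Y, g X Y = g Y X) (hJ : LinearMap.IsSkewAdjoint g J) (X : V) :
    g X (J X) = 0 := by
  have h : g X (J X) = -g X (J X) := by simpa [hgsymm (J X)] using hJ X X
  rwa [eq_neg_iff_add_eq_zero, ← two_mul, mul_eq_zero, or_iff_right two_ne_zero] at h

variable (ε g J) in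
def linearTypeTensor (ξ X Y : V) : V :=
  g X Y • ξ - g ξ Y • X + (ε * g X (J Y)) • J ξ - (ε * g ξ (J Y)) • J X

def curvatureOperator (S : V → V → V) (X Y Z : V) : V :=
  S (S X Y - S Y X) Z - S X (S Y Z) + S Y (S X Z)

theorem curvatureOperator_linearTypeTensor [NeZero (2 : K)] (hε : ε * ε = 1)
    (hgsymm : ∀ X Y, g X Y = g Y X) (hJ2 : ∀ X, J (J X) = ε • X)
    (hJ : LinearMap.IsSkewAdjoint g J) (ξ X Y Z : V) :
    curvatureOperator (linearTypeTensor ε g J ξ) X Y Z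
      = g ξ ξ • (g Y Z • X - g X Z • Y + (ε * g Y (J Z)) • J X - (ε * g X (J Z)) • J Y)
        - (2 * ε * g X (J Y)) • (g ξ (J Z) • ξ + g ξ Z • J ξ) := by
  have hJleft : ∀ X Y, g (J X) Y = -g X (J Y) := fun X Y => by simpa using hJ X Y
  have hswap : ∀ X Y, g X (J Y) = -g Y (J X) := fun X Y => by rw [hgsymm, hJleft]
  have hξ : g ξ (J ξ) = 0 := hJ.apply_apply_self_eq_zero hgsymm ξ
  simp only [curvatureOperator, linearTypeTensor, map_sub, map_add, map_smul,
    LinearMap.sub_apply, LinearMap.add_apply, LinearMap.smul_apply, smul_eq_mul, hJ2, hJleft,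
    smul_sub, smul_add]
  match_scalars <;>
  · simp only [hgsymm Y X, hgsymm ξ X, hgsymm ξ Y, hgsymm ξ Z,
      hswap Y X, hswap X ξ, hswap Y ξ, hξ]
    rcases mul_self_eq_one_iff.mp hε with rfl | rfl <;> ring

end LinearType

theorem stmt_1_general
    {V : Type*} [AddCommGroup V] [Module ℝ V]
    (ε : ℝ) (hε : ε = -1 ∨ ε = 1)
    (g : V →ₗ[ℝ] V →ₗ[ℝ] ℝ)
    (hgsymm : ∀ X Y : V, g X Y = g Y X)
    (J : V →ₗ[ℝ] V)
    (hJ2 : ∀ X : V, J (J X) = ε • X)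
    (hgJ : ∀ X Y : V, g (J X) (J Y) = -ε * g X Y)
    (ξ : V) (S : V → V → V)
    (hS : ∀ X Y : V, S X Y =
      g X Y • ξ - g ξ Y • X + (ε * g X (J Y)) • J ξ - (ε * g ξ (J Y)) • J X) :
    ∀ X Y Z : V,
      S (S X Y - S Y X) Z - S X (S Y Z) + S Y (S X Z)
        = g ξ ξ • (g Y Z • X - g X Z • Y
            + (ε * g Y (J Z)) • J X - (ε * g X (J Z)) • J Y)
          - (2 * ε * g X (J Y)) • (g ξ (J Z) • ξ + g ξ Z • J ξ) := by
  have hε2 : ε * ε = 1 := mul_self_eq_one_iff.mpr hε.symm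
  have hJ := isSkewAdjoint_of_sq_eq_smul (left_ne_zero_of_mul_eq_one hε2) hJ2 hgJ
  obtain rfl : S = linearTypeTensor ε g J ξ := funext₂ hS
  exact curvatureOperator_linearTypeTensor hε2 hgsymm hJ2 hJ ξ

/-- the curvature-type operator `R^S` of a non-degenerate
homogeneous ε-Kähler structure of linear type (with ζ = 0). -/
theorem stmt_1
    {V : Type*} [AddCommGroup V] [Module ℝ V] [FiniteDimensional ℝ V]
    (ε : ℝ) (hε : ε = -1 ∨ ε = 1)
    (g : V →ₗ[ℝ] V →ₗ[ℝ] ℝ)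
    (hgsymm : ∀ X Y : V, g X Y = g Y X)
    (hgnd : ∀ X : V, (∀ Y : V, g X Y = 0) → X = 0)
    (J : V →ₗ[ℝ] V)
    (hJ2 : ∀ X : V, J (J X) = ε • X)
    (hgJ : ∀ X Y : V, g (J X) (J Y) = -ε * g X Y)
    (ξ : V) (S : V → V → V)
    (hS : ∀ X Y : V, S X Y =
      g X Y • ξ - g ξ Y • X + (ε * g X (J Y)) • J ξ - (ε * g ξ (J Y)) • J X) :
    ∀ X Y Z : V,
      S (S X Y - S Y X) Z - S X (S Y Z) + S Y (S X Z)
        = g ξ ξ • (g Y Z • X - g X Z • Y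
            + (ε * g Y (J Z)) • J X - (ε * g X (J Z)) • J Y)
          - (2 * ε * g X (J Y)) • (g ξ (J Z) • ξ + g ξ Z • J ξ) :=
  stmt_1_general ε hε g hgsymm J hJ2 hgJ ξ S hS
end

section
/- Let S_X Y = g(X,Y)ξ − g(ξ,Y)X + ε g(X,JY)Jξ − ε g(ξ,JY)JX (linear type with ζ = 0), and let R_{XY}Z := g(ξ,ξ)·{g(Y,Z)X − g(X,Z)Y + ε g(Y,JZ)JX − ε g(X,JZ)JY − 2ε g(X,JY)JZ} (the curvature operator of constant ε-holomorphic sectional curvature c = −4g(ξ,ξ), in the sign convention R_{XY}Z = ∇_{[X,Y]}Z − ∇_X∇_Y Z + ∇_Y∇_X Z). Then R̃ := R − R^S satisfies R̃_{XY}Z = −2ε g(X,JY)·{g(ξ,ξ)JZ − g(ξ,JZ)ξ − g(ξ,Z)Jξ} for all X, Y, Z ∈ V. -/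
/-! `R^S` is expanded directly in terms of `g`, `J` and `ξ`. Beyond bilinearity, the
cancellations only use the skew-symmetry `g(JX, Y) = −g(X, JY)` (from `J² = ε` and
`g(J·, J·) = −ε g`, as `ε ≠ 0`), its consequence `g(X, JX) = 0`, and `ε² = 1`. -/

section EpsHermitian

variable {V : Type*} [AddCommGroup V] [Module ℝ V] {ε : ℝ}
  {g : V →ₗ[ℝ] V →ₗ[ℝ] ℝ} {J : V →ₗ[ℝ] V}

theorem apply_J_left_eq_neg (hε : ε = -1 ∨ ε = 1) (hJ2 : ∀ X : V, J (J X) = ε • X)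
    (hgJ : ∀ X Y : V, g (J X) (J Y) = -ε * g X Y) (X Y : V) :
    g (J X) Y = -g X (J Y) := by
  have hε0 : ε ≠ 0 := by rcases hε with rfl | rfl <;> norm_num
  have h := hgJ X (J Y)
  rw [hJ2 Y, map_smul, smul_eq_mul] at h
  exact mul_left_cancel₀ hε0 (by linarith)

theorem apply_J_comm_eq_neg (hgsymm : ∀ X Y : V, g X Y = g Y X)
    (hskew : ∀ X Y : V, g (J X) Y = -g X (J Y)) (X Y : V) :
    g Y (J X) = -g X (J Y) := by
  rw [hgsymm, hskew]

theorem apply_self_J_eq_zero (hswap : ∀ X Y : V, g Y (J X) = -g X (J Y)) (X : V) :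
    g X (J X) = 0 := by
  linarith [hswap X X]

end EpsHermitian

theorem stmt_2_general
    {V : Type*} [AddCommGroup V] [Module ℝ V]
    (ε : ℝ) (hε : ε = -1 ∨ ε = 1)
    (g : V →ₗ[ℝ] V →ₗ[ℝ] ℝ)
    (hgsymm : ∀ X Y : V, g X Y = g Y X)
    (J : V →ₗ[ℝ] V)
    (hJ2 : ∀ X : V, J (J X) = ε • X)
    (hgJ : ∀ X Y : V, g (J X) (J Y) = -ε * g X Y)
    (ξ : V) (S : V → V → V)
    (hS : ∀ X Y : V, S X Y =
      g X Y • ξ - g ξ Y • X + (ε * g X (J Y)) • J ξ - (ε * g ξ (J Y)) • J X)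
    (R : V → V → V → V)
    (hR : ∀ X Y Z : V, R X Y Z =
      g ξ ξ • (g Y Z • X - g X Z • Y
        + (ε * g Y (J Z)) • J X - (ε * g X (J Z)) • J Y
        - (2 * ε * g X (J Y)) • J Z)) :
    ∀ X Y Z : V,
      R X Y Z - (S (S X Y - S Y X) Z - S X (S Y Z) + S Y (S X Z))
        = (-(2 * ε * g X (J Y))) • (g ξ ξ • J Z - g ξ (J Z) • ξ - g ξ Z • J ξ) := by
  have hskew := apply_J_left_eq_neg hε hJ2 hgJ
  have hswap := apply_J_comm_eq_neg hgsymm hskew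
  have hzero := apply_self_J_eq_zero hswap
  intro X Y Z
  simp only [hR, hS, map_add, map_sub, map_smul, smul_eq_mul, LinearMap.add_apply,
    LinearMap.sub_apply, LinearMap.smul_apply, hJ2, hskew, hzero]
  -- Bring every scalar to a normal form `g A B`, `g A (J B)` with `A ≤ B` in the order `ξ, X, Y, Z`.
  simp only [hswap ξ X, hswap ξ Y, hswap X Y, hgsymm X ξ, hgsymm Y ξ, hgsymm Y X]
  match_scalars <;> rcases hε with rfl | rfl <;> ring

/-- the tensor `R̃ = R − R^S` for a non-degenerate homogeneous
ε-Kähler structure of linear type, where `R` is the curvature operator of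
constant ε-holomorphic sectional curvature `c = −4g(ξ,ξ)`. -/
theorem stmt_2
    {V : Type*} [AddCommGroup V] [Module ℝ V] [FiniteDimensional ℝ V]
    (ε : ℝ) (hε : ε = -1 ∨ ε = 1)
    (g : V →ₗ[ℝ] V →ₗ[ℝ] ℝ)
    (hgsymm : ∀ X Y : V, g X Y = g Y X)
    (hgnd : ∀ X : V, (∀ Y : V, g X Y = 0) → X = 0)
    (J : V →ₗ[ℝ] V)
    (hJ2 : ∀ X : V, J (J X) = ε • X)
    (hgJ : ∀ X Y : V, g (J X) (J Y) = -ε * g X Y)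
    (ξ : V) (S : V → V → V)
    (hS : ∀ X Y : V, S X Y =
      g X Y • ξ - g ξ Y • X + (ε * g X (J Y)) • J ξ - (ε * g ξ (J Y)) • J X)
    (R : V → V → V → V)
    (hR : ∀ X Y Z : V, R X Y Z =
      g ξ ξ • (g Y Z • X - g X Z • Y
        + (ε * g Y (J Z)) • J X - (ε * g X (J Z)) • J Y
        - (2 * ε * g X (J Y)) • J Z)) :
    ∀ X Y Z : V,
      R X Y Z - (S (S X Y - S Y X) Z - S X (S Y Z) + S Y (S X Z))
        = (-(2 * ε * g X (J Y))) • (g ξ ξ • J Z - g ξ (J Z) • ξ - g ξ Z • J ξ) :=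
  stmt_2_general ε hε g hgsymm J hJ2 hgJ ξ S hS R hR
end

section
/- Let S_X Y = g(X,Y)ξ − g(Y,ξ)X − Σ_{a=1}^{3} ε_a·(g(J_aY,ξ)J_aX − g(X,J_aY)J_aξ) + Σ_{a=1}^{3} g(X,ζ^a)J_aY for arbitrary ξ, ζ¹, ζ², ζ³ ∈ V. Then the trilinear form S_{XYZ} := g(S_X Y, Z) satisfies S_{XYZ} = −S_{XZY}, and there exist linear forms π¹, π², π³ on V such that for every cyclic permutation (a,b,c) of (1,2,3) and all X, Y, Z ∈ V: S_{X, J_aY, J_aZ} + ε_a·S_{XYZ} = ε_b·π^c(X)·g(J_bY, J_aZ) − ε_c·π^b(X)·g(J_cY, J_aZ). -/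
/-!
Write `u ∧ v := g(u, ·) v - g(v, ·) u`, so that
`S_X = X ∧ ξ - ∑ ε_a J_aX ∧ J_aξ + ∑ g(X, ζ^a) J_a`. Every summand is `g`-skew, which is the
first claim. For the second, skewness of `J_a` gives
`S_{X, J_aY, J_aZ} + ε_a S_{XYZ} = g((ε_a S_X - J_a S_X J_a) Y, Z)`. Since
`J_a ∘ (u ∧ v) ∘ J_a = -(J_au ∧ J_av)`, the quaternionic relations make the `ξ`-part of `S_X`
satisfy `J_a W J_a = ε_a W`, so it drops out. In the `ζ`-part, `J_a J_b J_a = -ε_a J_b` for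
`b ≠ a`, which leaves `2 ε_a ∑_{b ≠ a} g(X, ζ^b) J_b`; rewriting `g(J_bY, J_aZ)` through the
multiplication table of the `J_a` matches this with `π^a = 2δ g(·, ζ^a)`.
-/

open LinearMap

namespace EpsQuaternionKahler

variable {R M : Type*} [CommRing R] [AddCommGroup M] [Module R M]

section Wedge

def wedge (g : M →ₗ[R] M →ₗ[R] R) (u v : M) : Module.End R M :=
  (g u).smulRight v - (g v).smulRight u

@[simp]
lemma wedge_apply (g : M →ₗ[R] M →ₗ[R] R) (u v Y : M) :
    wedge g u v Y = g u Y • v - g v Y • u :=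
  rfl

lemma wedge_neg_neg (g : M →ₗ[R] M →ₗ[R] R) (u v : M) : wedge g (-u) (-v) = wedge g u v := by
  ext Y
  simp

lemma wedge_smul_smul (g : M →ₗ[R] M →ₗ[R] R) (c : R) (u v : M) :
    wedge g (c • u) (c • v) = (c * c) • wedge g u v := by
  ext Y
  simp only [wedge_apply, map_smul, LinearMap.smul_apply, smul_eq_mul, smul_sub, smul_smul]
  ring_nf

lemma wedge_mem_skewAdjointSubmodule {g : M →ₗ[R] M →ₗ[R] R} (hg : ∀ X Y, g X Y = g Y X)
    (u v : M) : wedge g u v ∈ g.skewAdjointSubmodule := by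
  rw [mem_skewAdjointSubmodule]
  intro Y Z
  simp only [wedge_apply, Pi.neg_apply, map_neg, map_sub, map_smul, LinearMap.sub_apply,
    LinearMap.smul_apply, smul_eq_mul, hg v Y, hg u Y]
  ring

lemma mul_wedge_mul {g : M →ₗ[R] M →ₗ[R] R} {J : Module.End R M} (hJ : g.IsSkewAdjoint J)
    (u v : M) : J * wedge g u v * J = -wedge g (J u) (J v) := by
  ext Y
  simp only [Module.End.mul_apply, wedge_apply, map_sub, map_smul, LinearMap.neg_apply, hJ _ Y,
    Pi.neg_apply, map_neg, neg_smul]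
  abel

end Wedge

lemma _root_.LinearMap.IsSkewAdjoint.apply_apply_eq_neg {g : M →ₗ[R] M →ₗ[R] R}
    {J : Module.End R M} (hJ : g.IsSkewAdjoint J) (u v : M) : g u (J v) = -g (J u) v := by
  rw [hJ u v, Pi.neg_apply, map_neg, neg_neg]

lemma _root_.LinearMap.IsSkewAdjoint.apply_mul_add_smul {g : M →ₗ[R] M →ₗ[R] R}
    {J : Module.End R M} (hJ : g.IsSkewAdjoint J) (A : Module.End R M) (e : R) (Y Z : M) :
    g (A (J Y)) (J Z) + e * g (A Y) Z = g ((e • A - J * A * J) Y) Z := by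
  rw [hJ.apply_apply_eq_neg]
  simp only [LinearMap.sub_apply, LinearMap.smul_apply, Module.End.mul_apply, map_sub, map_smul,
    smul_eq_mul]
  ring

structure IsEpsQuaternionic (δ : R) (J : Fin 3 → Module.End R M) : Prop where
  mul_self : ∀ a, J a * J a = ![-1, δ, δ] a • 1
  mul_zero_one : J 0 * J 1 = J 2

namespace IsEpsQuaternionic

variable {δ : R} {J : Fin 3 → Module.End R M}

lemma mul_zero_zero (hJ : IsEpsQuaternionic δ J) : J 0 * J 0 = -1 := by
  simpa using hJ.mul_self 0

lemma mul_one_one (hJ : IsEpsQuaternionic δ J) : J 1 * J 1 = δ • 1 :=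
  hJ.mul_self 1

lemma mul_two_two (hJ : IsEpsQuaternionic δ J) : J 2 * J 2 = δ • 1 :=
  hJ.mul_self 2

lemma mul_zero_two (hJ : IsEpsQuaternionic δ J) : J 0 * J 2 = -J 1 := by
  rw [← hJ.mul_zero_one, ← mul_assoc, hJ.mul_zero_zero, neg_one_mul]

lemma mul_one_zero_mul_one (hJ : IsEpsQuaternionic δ J) : J 1 * J 0 * J 1 = -δ • J 0 := by
  calc J 1 * J 0 * J 1 = -(J 0 * J 0) * (J 1 * J 0 * J 1) := by
        rw [hJ.mul_zero_zero, neg_neg, one_mul]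
    _ = -(J 0 * ((J 0 * J 1) * (J 0 * J 1))) := by noncomm_ring
    _ = -δ • J 0 := by rw [hJ.mul_zero_one, hJ.mul_two_two, mul_smul_comm, mul_one, neg_smul]

lemma mul_one_zero (hJ : IsEpsQuaternionic δ J) (hδ : δ * δ = 1) : J 1 * J 0 = -J 2 := by
  calc J 1 * J 0 = (δ * δ) • (J 1 * J 0) := by rw [hδ, one_smul]
    _ = δ • (J 1 * J 0 * J 1 * J 1) := by
        rw [mul_assoc _ (J 1), hJ.mul_one_one, mul_smul_comm, mul_one, smul_smul]
    _ = -J 2 := by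
        rw [hJ.mul_one_zero_mul_one, smul_mul_assoc, hJ.mul_zero_one, smul_smul, mul_neg, hδ,
          neg_one_smul]

lemma mul_one_two (hJ : IsEpsQuaternionic δ J) : J 1 * J 2 = -δ • J 0 := by
  rw [← hJ.mul_zero_one, ← mul_assoc, hJ.mul_one_zero_mul_one]

lemma mul_two_one (hJ : IsEpsQuaternionic δ J) : J 2 * J 1 = δ • J 0 := by
  rw [← hJ.mul_zero_one, mul_assoc, hJ.mul_one_one, mul_smul_comm, mul_one]

lemma mul_two_zero (hJ : IsEpsQuaternionic δ J) (hδ : δ * δ = 1) : J 2 * J 0 = J 1 := by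
  rw [← hJ.mul_zero_one, mul_assoc, hJ.mul_one_zero hδ, mul_neg, hJ.mul_zero_two, neg_neg]

lemma mul_mul_self_of_ne (hJ : IsEpsQuaternionic δ J) (hδ : δ * δ = 1) {a b : Fin 3}
    (hab : a ≠ b) : J a * J b * J a = -(![-1, δ, δ] a) • J b := by
  fin_cases a <;> fin_cases b <;> first
    | exact absurd rfl hab
    | simp [hJ.mul_zero_one, hJ.mul_zero_two, hJ.mul_one_zero hδ, hJ.mul_one_two, hJ.mul_two_one,
        hJ.mul_two_zero hδ]

lemma smul_sub_mul_mul (hJ : IsEpsQuaternionic δ J) (hδ : δ * δ = 1) (a b : Fin 3) :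
    ![-1, δ, δ] a • J b - J a * J b * J a = if b = a then 0 else (2 * ![-1, δ, δ] a) • J b := by
  split_ifs with hba
  · rw [hba, hJ.mul_self, smul_mul_assoc, one_mul, sub_self]
  · rw [hJ.mul_mul_self_of_ne hδ (Ne.symm hba)]
    module

end IsEpsQuaternionic

def spWedge (g : M →ₗ[R] M →ₗ[R] R) (J : Fin 3 → Module.End R M) (δ : R) (X ξ : M) :
    Module.End R M :=
  wedge g X ξ - ∑ a, ![-1, δ, δ] a • wedge g (J a X) (J a ξ)

def linearTypeOp (g : M →ₗ[R] M →ₗ[R] R) (J : Fin 3 → Module.End R M) (δ : R) (ξ : M)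
    (ζ : Fin 3 → M) (X : M) : Module.End R M :=
  spWedge g J δ X ξ + ∑ a, g X (ζ a) • J a

variable {g : M →ₗ[R] M →ₗ[R] R} {J : Fin 3 → Module.End R M}

lemma IsEpsQuaternionic.mul_spWedge_mul {δ : R} (hJ : IsEpsQuaternionic δ J) (hδ : δ * δ = 1)
    (hJs : ∀ a, g.IsSkewAdjoint (J a)) (a : Fin 3) (X ξ : M) :
    J a * spWedge g J δ X ξ * J a = ![-1, δ, δ] a • spWedge g J δ X ξ := by
  simp only [spWedge, Fin.sum_univ_three, mul_sub, sub_mul, mul_add, add_mul, mul_smul_comm,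
    smul_mul_assoc, mul_wedge_mul (hJs a)]
  have hJJ : ∀ b c v, J b (J c v) = (J b * J c) v := fun _ _ _ => rfl
  simp only [hJJ]
  fin_cases a <;>
    simp only [Fin.zero_eta, Fin.mk_one, Fin.reduceFinMk, Matrix.cons_val_zero, Matrix.cons_val_one,
      Matrix.cons_val, hJ.mul_zero_zero, hJ.mul_one_one, hJ.mul_two_two, hJ.mul_zero_one,
      hJ.mul_zero_two, hJ.mul_one_zero hδ, hJ.mul_one_two, hJ.mul_two_one, hJ.mul_two_zero hδ,
      LinearMap.neg_apply, LinearMap.smul_apply, Module.End.one_apply, wedge_neg_neg, neg_smul,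
      wedge_smul_smul, hδ, smul_sub, smul_add, smul_smul] <;> module

lemma linearTypeOp_apply (hg : ∀ X Y, g X Y = g Y X) (hJs : ∀ a, g.IsSkewAdjoint (J a)) (δ : R)
    (ξ : M) (ζ : Fin 3 → M) (X Y : M) :
    linearTypeOp g J δ ξ ζ X Y = g X Y • ξ - g Y ξ • X
      - ∑ a, ![-1, δ, δ] a • (g (J a Y) ξ • J a X - g X (J a Y) • J a ξ)
      + ∑ a, g X (ζ a) • J a Y := by
  simp only [linearTypeOp, spWedge, LinearMap.add_apply, LinearMap.sub_apply, LinearMap.sum_apply,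
    LinearMap.smul_apply, wedge_apply, hJs _ X Y, hJs _ ξ Y, Pi.neg_apply, map_neg, hg ξ Y,
    hg (J _ Y) ξ, neg_smul, sub_neg_eq_add, neg_add_eq_sub]

lemma linearTypeOp_mem_skewAdjointSubmodule (hg : ∀ X Y, g X Y = g Y X)
    (hJs : ∀ a, g.IsSkewAdjoint (J a)) (δ : R) (ξ : M) (ζ : Fin 3 → M) (X : M) :
    linearTypeOp g J δ ξ ζ X ∈ g.skewAdjointSubmodule :=
  add_mem (sub_mem (wedge_mem_skewAdjointSubmodule hg _ _)
      (sum_mem fun _ _ => Submodule.smul_mem _ _ (wedge_mem_skewAdjointSubmodule hg _ _)))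
    (sum_mem fun a _ => Submodule.smul_mem _ _ ((mem_skewAdjointSubmodule _).2 (hJs a)))

lemma IsEpsQuaternionic.smul_sub_mul_linearTypeOp_mul {δ : R} (hJ : IsEpsQuaternionic δ J)
    (hδ : δ * δ = 1) (hJs : ∀ a, g.IsSkewAdjoint (J a)) (ξ : M) (ζ : Fin 3 → M) (a : Fin 3)
    (X : M) :
    ![-1, δ, δ] a • linearTypeOp g J δ ξ ζ X - J a * linearTypeOp g J δ ξ ζ X * J a =
      ∑ b, (if b = a then 0 else 2 * ![-1, δ, δ] a * g X (ζ b)) • J b := by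
  have hsum : ∀ b, ![-1, δ, δ] a • (g X (ζ b) • J b) - J a * (g X (ζ b) • J b) * J a =
      (if b = a then 0 else 2 * ![-1, δ, δ] a * g X (ζ b)) • J b := by
    intro b
    rw [mul_smul_comm, smul_mul_assoc, smul_comm, ← smul_sub, hJ.smul_sub_mul_mul hδ]
    split_ifs <;> simp [smul_smul, mul_comm]
  simp only [linearTypeOp, smul_add, mul_add, add_mul, hJ.mul_spWedge_mul hδ hJs, Finset.smul_sum,
    Finset.mul_sum, Finset.sum_mul, ← hsum, Finset.sum_sub_distrib]
  abel

end EpsQuaternionKahler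

open EpsQuaternionKahler

theorem stmt_4_general
    {V : Type*} [AddCommGroup V] [Module ℝ V]
    (δ : ℝ) (hδ : δ = -1 ∨ δ = 1)
    (ε : Fin 3 → ℝ) (hε : ε = ![-1, δ, δ])
    (g : V →ₗ[ℝ] V →ₗ[ℝ] ℝ)
    (hgsymm : ∀ X Y : V, g X Y = g Y X)
    (J : Fin 3 → V →ₗ[ℝ] V)
    (hJ2 : ∀ (a : Fin 3) (X : V), J a (J a X) = ε a • X)
    (hJ12 : ∀ X : V, J 0 (J 1 X) = J 2 X)
    (hJskew : ∀ (a : Fin 3) (X Y : V), g (J a X) Y = - g X (J a Y))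
    (ξ : V) (ζ : Fin 3 → V) (S : V → V → V)
    (hS : ∀ X Y : V, S X Y =
      g X Y • ξ - g Y ξ • X
        - ∑ a : Fin 3, ε a • (g (J a Y) ξ • J a X - g X (J a Y) • J a ξ)
        + ∑ a : Fin 3, g X (ζ a) • J a Y) :
    (∀ X Y Z : V, g (S X Y) Z = - g (S X Z) Y) ∧
    ∃ π : Fin 3 → V →ₗ[ℝ] ℝ, ∀ X Y Z : V,
      (g (S X (J 0 Y)) (J 0 Z) + ε 0 * g (S X Y) Z
          = ε 1 * π 2 X * g (J 1 Y) (J 0 Z) - ε 2 * π 1 X * g (J 2 Y) (J 0 Z)) ∧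
      (g (S X (J 1 Y)) (J 1 Z) + ε 1 * g (S X Y) Z
          = ε 2 * π 0 X * g (J 2 Y) (J 1 Z) - ε 0 * π 2 X * g (J 0 Y) (J 1 Z)) ∧
      (g (S X (J 2 Y)) (J 2 Z) + ε 2 * g (S X Y) Z
          = ε 0 * π 1 X * g (J 0 Y) (J 2 Z) - ε 1 * π 0 X * g (J 1 Y) (J 2 Z)) := by
  subst hε
  have hδ2 : δ * δ = 1 := by rcases hδ with rfl | rfl <;> norm_num
  have hJ : IsEpsQuaternionic δ J := ⟨fun a => LinearMap.ext (hJ2 a), LinearMap.ext hJ12⟩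
  have hJs : ∀ a, g.IsSkewAdjoint (J a) := fun a X Y => by simp [hJskew]
  obtain rfl : S = fun X Y => linearTypeOp g J δ ξ ζ X Y := by
    ext X Y
    rw [hS, linearTypeOp_apply hgsymm hJs]
  refine ⟨fun X Y Z => ?_, fun a => (2 * δ) • g.flip (ζ a), fun X Y Z => ?_⟩
  · rw [linearTypeOp_mem_skewAdjointSubmodule hgsymm hJs δ ξ ζ X Y Z, hgsymm]
    simp
  · have hJJ : ∀ a b, g (J b Y) (J a Z) = -g ((J a * J b) Y) Z := fun a b =>
      (hJs a).apply_apply_eq_neg _ _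
    simp only [(hJs _).apply_mul_add_smul, hJ.smul_sub_mul_linearTypeOp_mul hδ2 hJs, hJJ,
      hJ.mul_zero_one, hJ.mul_zero_two, hJ.mul_one_zero hδ2, hJ.mul_one_two, hJ.mul_two_one,
      hJ.mul_two_zero hδ2]
    refine ⟨?_, ?_, ?_⟩ <;>
      simp only [Fin.sum_univ_three, Matrix.cons_val_zero, Matrix.cons_val_one, Matrix.cons_val,
        ite_smul, zero_smul, Fin.reduceEq, ↓reduceIte, LinearMap.zero_apply, map_zero,
        LinearMap.add_apply, LinearMap.smul_apply, LinearMap.neg_apply, map_add, map_smul, map_neg,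
        smul_eq_mul, flip_apply] <;>
      rcases hδ with rfl | rfl <;> ring

/-- pointwise symmetries of a homogeneous ε-quaternion Kähler
structure of linear type.  Indices `0,1,2` of `Fin 3` correspond to `1,2,3`
of the paper; the three equations are those for the cyclic permutations
`(a,b,c) = (1,2,3), (2,3,1), (3,1,2)`. -/
theorem stmt_4
    {V : Type*} [AddCommGroup V] [Module ℝ V] [FiniteDimensional ℝ V]
    (δ : ℝ) (hδ : δ = -1 ∨ δ = 1)
    (ε : Fin 3 → ℝ) (hε : ε = ![-1, δ, δ])
    (g : V →ₗ[ℝ] V →ₗ[ℝ] ℝ)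
    (hgsymm : ∀ X Y : V, g X Y = g Y X)
    (hgnd : ∀ X : V, (∀ Y : V, g X Y = 0) → X = 0)
    (J : Fin 3 → V →ₗ[ℝ] V)
    (hJ2 : ∀ (a : Fin 3) (X : V), J a (J a X) = ε a • X)
    (hJ12 : ∀ X : V, J 0 (J 1 X) = J 2 X)
    (hJskew : ∀ (a : Fin 3) (X Y : V), g (J a X) Y = - g X (J a Y))
    (ξ : V) (ζ : Fin 3 → V) (S : V → V → V)
    (hS : ∀ X Y : V, S X Y =
      g X Y • ξ - g Y ξ • X
        - ∑ a : Fin 3, ε a • (g (J a Y) ξ • J a X - g X (J a Y) • J a ξ)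
        + ∑ a : Fin 3, g X (ζ a) • J a Y) :
    (∀ X Y Z : V, g (S X Y) Z = - g (S X Z) Y) ∧
    ∃ π : Fin 3 → V →ₗ[ℝ] ℝ, ∀ X Y Z : V,
      (g (S X (J 0 Y)) (J 0 Z) + ε 0 * g (S X Y) Z
          = ε 1 * π 2 X * g (J 1 Y) (J 0 Z) - ε 2 * π 1 X * g (J 2 Y) (J 0 Z)) ∧
      (g (S X (J 1 Y)) (J 1 Z) + ε 1 * g (S X Y) Z
          = ε 2 * π 0 X * g (J 2 Y) (J 1 Z) - ε 0 * π 2 X * g (J 0 Y) (J 1 Z)) ∧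
      (g (S X (J 2 Y)) (J 2 Z) + ε 2 * g (S X Y) Z
          = ε 0 * π 1 X * g (J 0 Y) (J 2 Z) - ε 1 * π 0 X * g (J 1 Y) (J 2 Z)) :=
  stmt_4_general δ hδ ε hε g hgsymm J hJ2 hJ12 hJskew ξ ζ S hS
end

section
/- Assume dim V = 4n with n ≥ 2. Define the subspaces of trilinear forms on V: QK₁(V) = {S : there is θ ∈ V* with S_{XYZ} = Σ_{a=1}^3 θ(J_aX)·g(J_aY,Z)}; QK₂(V) = {S : there are θ¹, θ², θ³ ∈ V* with Σ_{a=1}^3 θ^a∘J_a = 0 and S_{XYZ} = Σ_{a=1}^3 θ^a(X)·g(J_aY,Z)}; QK₃(V) = {S : there is θ ∈ V* with S_{XYZ} = g(X,Y)θ(Z) − g(X,Z)θ(Y) − Σ_{a=1}^3 ε_a·(g(X,J_aY)θ(J_aZ) − g(X,J_aZ)θ(J_aY))}. Then dim QK₁(V) = 4n, dim QK₂(V) = 8n, and dim QK₃(V) = 4n. -/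
/-!
Each of the three spaces is the image of an injective linear map: from `V*` for `QK₁` and `QK₃`,
and for `QK₂` from the kernel of the surjection `(θ¹, θ², θ³) ↦ Σ θᵃ ∘ J_a : (V*)³ → V*`, which
has dimension `12n - 4n = 8n`. The structure relations force the `J_a` to anticommute
pairwise. Hence if `Σ c_a J_a = 0`, anticommuting with `J_a` gives `2 ε_a c_a = 0`; by
nondegeneracy of `g` this makes the parametrisation of `QK₂` injective, and that of `QK₁` factors
through it via `θᵃ = θ ∘ J_a`. Anticommutation also makes every `J_a` traceless. If the form of
`QK₃` attached to `θ` vanishes, then for each `Z` an explicit endomorphism of `V` vanishes, and its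
trace is `(4n + 2) θ(Z)`.
-/

open Module LinearMap

theorem LinearMap.trace_eq_zero_of_mul_eq_neg_mul {K M : Type*} [Field K] [CharZero K]
    [AddCommGroup M] [Module K M] [FiniteDimensional K M] {A B : Module.End K M} {c : K}
    (hc : c ≠ 0) (hB : B * B = c • 1) (hAB : A * B = -(B * A)) : trace K M A = 0 := by
  have hABB : trace K M (A * B * B) = 0 := by
    refine self_eq_neg.mp ?_
    calc trace K M (A * B * B) = trace K M (B * A * B) := by
          rw [trace_mul_comm, ← mul_assoc]
      _ = -trace K M (A * B * B) := by rw [← map_neg, ← neg_mul, hAB, neg_neg]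
  rw [mul_assoc, hB, mul_smul_comm, mul_one, map_smul, smul_eq_mul] at hABB
  exact (mul_eq_zero.mp hABB).resolve_left hc

theorem LinearMap.bijective_of_apply_apply_eq_smul {K M : Type*} [Field K] [AddCommGroup M]
    [Module K M] {f : M →ₗ[K] M} {c : K} (hc : c ≠ 0) (hf : ∀ x, f (f x) = c • x) :
    Function.Bijective f :=
  ⟨fun x y h => by simpa [hf, hc] using congrArg f h,
    fun x => ⟨c⁻¹ • f x, by simp [hf, hc]⟩⟩

theorem Set.finrank_image_of_injective {R M N : Type*} [Semiring R] [AddCommMonoid M]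
    [Module R M] [AddCommMonoid N] [Module R N] {f : M →ₗ[R] N} (hf : Function.Injective f)
    (p : Submodule R M) : Set.finrank R (f '' p) = finrank R p := by
  rw [Set.finrank, ← Submodule.map_coe, Submodule.span_eq]
  exact (LinearEquiv.finrank_eq (p.equivMapOfInjective f hf)).symm

theorem Set.finrank_range_of_injective {R M N : Type*} [Semiring R] [AddCommMonoid M]
    [Module R M] [AddCommMonoid N] [Module R N] {f : M →ₗ[R] N} (hf : Function.Injective f) :
    Set.finrank R (Set.range f) = finrank R M := by
  rw [Set.finrank, ← LinearMap.coe_range, Submodule.span_eq, finrank_range_of_inj hf]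

theorem setOf_exists_forall_apply_eq {R V M : Type*} [CommSemiring R] [AddCommMonoid V]
    [Module R V] (Φ : M → V →ₗ[R] V →ₗ[R] V →ₗ[R] R) :
    {S | ∃ θ, ∀ X Y Z, S X Y Z = Φ θ X Y Z} = Set.range Φ := by
  ext S
  simp [LinearMap.ext_iff, eq_comm]

theorem setOf_exists_and_forall_apply_eq {R V M : Type*} [CommSemiring R] [AddCommMonoid V]
    [Module R V] (Φ : M → V →ₗ[R] V →ₗ[R] V →ₗ[R] R) (P : M → Prop) :
    {S | ∃ θ, P θ ∧ ∀ X Y Z, S X Y Z = Φ θ X Y Z} = Φ '' {θ | P θ} := by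
  ext S
  simp [LinearMap.ext_iff, eq_comm]

section Quaternionic

variable {V : Type*} [AddCommGroup V] [Module ℝ V] {J : Fin 3 → V →ₗ[ℝ] V} {ε : Fin 3 → ℝ}

theorem anticomm_of_mul_eq (hJ2 : ∀ a X, J a (J a X) = ε a • X)
    (hJ12 : ∀ X, J 0 (J 1 X) = J 2 X) (hε0 : ε 0 = -1) (hε12 : ε 1 = ε 2) (hε1 : ε 1 ≠ 0) :
    Pairwise fun a b => ∀ X, J a (J b X) = -J b (J a X) := by
  have h00 X : J 0 (J 0 X) = -X := by rw [hJ2, hε0, neg_one_smul]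
  have h10 X : J 1 (J 0 X) = -J 0 (J 1 X) := by
    have h := congrArg (J 0) (hJ2 2 (J 1 X))
    rw [← hJ12, ← hJ12, h00, hJ2 1, map_smul, map_smul, map_smul, ← hε12] at h
    apply smul_right_injective V hε1
    simp only [smul_neg, ← h, neg_neg]
  have h02 X : J 0 (J 2 X) = -J 2 (J 0 X) := by simp [← hJ12, h00, h10]
  have h12 X : J 1 (J 2 X) = -J 2 (J 1 X) := by simp [← hJ12, h10, hJ2 1]
  intro a b hab X
  fin_cases a <;> fin_cases b <;> simp [h10, h02, h12] at hab ⊢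

theorem smul_eq_zero_of_sum_smul_eq_zero (hJ2 : ∀ a X, J a (J a X) = ε a • X)
    (hε : ∀ a, ε a ≠ 0) (hanti : Pairwise fun a b => ∀ X, J a (J b X) = -J b (J a X))
    {c : Fin 3 → ℝ} (h : ∀ Y, ∑ b, c b • J b Y = 0) (a : Fin 3) (Y : V) : c a • Y = 0 := by
  have hanticomm : (2 * ε a * c a) • Y = 0 :=
    calc (2 * ε a * c a) • Y = ∑ b, c b • (J a (J b Y) + J b (J a Y)) := by
          rw [Finset.sum_eq_single a (fun b _ hba => by
            rw [hanti hba.symm, neg_add_cancel, smul_zero]) (by simp), hJ2]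
          module
      _ = J a (∑ b, c b • J b Y) + ∑ b, c b • J b (J a Y) := by
          simp [smul_add, Finset.sum_add_distrib]
      _ = 0 := by rw [h, h, map_zero, add_zero]
  rw [mul_smul, smul_eq_zero] at hanticomm
  exact hanticomm.resolve_left (mul_ne_zero two_ne_zero (hε a))

theorem trace_eq_zero_of_anticomm [FiniteDimensional ℝ V]
    (hJ2 : ∀ a X, J a (J a X) = ε a • X) (hε : ∀ a, ε a ≠ 0)
    (hanti : Pairwise fun a b => ∀ X, J a (J b X) = -J b (J a X)) (a : Fin 3) :
    trace ℝ V (J a) = 0 := by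
  have hsq : J (a + 1) * J (a + 1) = ε (a + 1) • 1 := LinearMap.ext (hJ2 (a + 1))
  refine trace_eq_zero_of_mul_eq_neg_mul (hε (a + 1)) hsq (LinearMap.ext fun X => ?_)
  exact hanti (by fin_cases a <;> decide) X

end Quaternionic

section LinearTypeForms

variable {V : Type*} [AddCommGroup V] [Module ℝ V] (g : V →ₗ[ℝ] V →ₗ[ℝ] ℝ)
  (J : Fin 3 → V →ₗ[ℝ] V) (ε : Fin 3 → ℝ)

def qk₂Map : (Fin 3 → V →ₗ[ℝ] ℝ) →ₗ[ℝ] V →ₗ[ℝ] V →ₗ[ℝ] V →ₗ[ℝ] ℝ :=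
  ∑ a, smulRightₗ.flip (g ∘ₗ J a) ∘ₗ proj a

@[simp]
theorem qk₂Map_apply (θ : Fin 3 → V →ₗ[ℝ] ℝ) (X Y Z : V) :
    qk₂Map g J θ X Y Z = ∑ a, θ a X * g (J a Y) Z := by
  simp [qk₂Map]

def qk₁Map : (V →ₗ[ℝ] ℝ) →ₗ[ℝ] V →ₗ[ℝ] V →ₗ[ℝ] V →ₗ[ℝ] ℝ :=
  qk₂Map g J ∘ₗ pi fun a => (J a).dualMap

@[simp]
theorem qk₁Map_apply (θ : V →ₗ[ℝ] ℝ) (X Y Z : V) :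
    qk₁Map g J θ X Y Z = ∑ a, θ (J a X) * g (J a Y) Z := by
  simp [qk₁Map]

def sumDualMap : (Fin 3 → V →ₗ[ℝ] ℝ) →ₗ[ℝ] V →ₗ[ℝ] ℝ :=
  ∑ a, (J a).dualMap ∘ₗ proj a

@[simp]
theorem sumDualMap_apply (θ : Fin 3 → V →ₗ[ℝ] ℝ) (X : V) :
    sumDualMap J θ X = ∑ a, θ a (J a X) := by
  simp [sumDualMap]

def wedgeRight (B : V →ₗ[ℝ] V →ₗ[ℝ] ℝ) :
    (V →ₗ[ℝ] ℝ) →ₗ[ℝ] V →ₗ[ℝ] V →ₗ[ℝ] V →ₗ[ℝ] ℝ :=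
  mk₂ ℝ (fun φ X => (B X).smulRight φ - φ.smulRight (B X))
    (fun _ _ _ => by ext; simp; ring) (fun _ _ _ => by ext; simp; ring)
    (fun _ _ _ => by ext; simp; ring) (fun _ _ _ => by ext; simp; ring)

-- `+ (-ε a) •` rather than `-`: instance search does not find `AddCommGroup` on
-- `V →ₗ[ℝ] V →ₗ[ℝ] V →ₗ[ℝ] ℝ`, so maps into it cannot be subtracted.
def qk₃Map : (V →ₗ[ℝ] ℝ) →ₗ[ℝ] V →ₗ[ℝ] V →ₗ[ℝ] V →ₗ[ℝ] ℝ :=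
  wedgeRight g + ∑ a, (-ε a) • (wedgeRight (g.compl₂ (J a)) ∘ₗ (J a).dualMap)

@[simp]
theorem qk₃Map_apply (θ : V →ₗ[ℝ] ℝ) (X Y Z : V) :
    qk₃Map g J ε θ X Y Z = g X Y * θ Z - g X Z * θ Y
      - ∑ a, ε a * (g X (J a Y) * θ (J a Z) - g X (J a Z) * θ (J a Y)) := by
  simp [qk₃Map, wedgeRight, mul_comm (θ _) (g _ _), mul_sub, Finset.sum_sub_distrib]
  ring

variable {g J ε}

theorem finrank_ker_sumDualMap [FiniteDimensional ℝ V] (hJ0 : Function.Injective (J 0)) :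
    finrank ℝ (ker (sumDualMap J)) = 2 * finrank ℝ V := by
  have hsurj : Function.Surjective (sumDualMap J) := fun φ => by
    obtain ⟨ψ, rfl⟩ := dualMap_surjective_of_injective hJ0 φ
    exact ⟨Pi.single 0 ψ, LinearMap.ext fun X => by simp [Fin.sum_univ_three]⟩
  have := finrank_range_add_finrank_ker (sumDualMap J)
  rw [range_eq_top.mpr hsurj, finrank_top, finrank_pi_fintype] at this
  simp only [finrank_linearMap_self, Finset.sum_const, Finset.card_univ, Fintype.card_fin,
    smul_eq_mul] at this
  omega

theorem qk₂Map_injective (hgnd : ∀ X, (∀ Y, g X Y = 0) → X = 0)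
    (hJ2 : ∀ a X, J a (J a X) = ε a • X) (hε : ∀ a, ε a ≠ 0)
    (hanti : Pairwise fun a b => ∀ X, J a (J b X) = -J b (J a X)) :
    Function.Injective (qk₂Map g J) := by
  refine (injective_iff_map_eq_zero _).mpr fun θ hθ =>
    funext fun a => LinearMap.ext fun X => ?_
  have hsum : ∀ Y, ∑ b, θ b X • J b Y = 0 := fun Y => hgnd _ fun Z => by
    simpa using congr($hθ X Y Z)
  rcases smul_eq_zero.mp (smul_eq_zero_of_sum_smul_eq_zero hJ2 hε hanti hsum a X) with h | rfl
  · exact h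
  · exact map_zero _

theorem qk₁Map_injective (hgnd : ∀ X, (∀ Y, g X Y = 0) → X = 0)
    (hJ2 : ∀ a X, J a (J a X) = ε a • X) (hε : ∀ a, ε a ≠ 0)
    (hanti : Pairwise fun a b => ∀ X, J a (J b X) = -J b (J a X)) :
    Function.Injective (qk₁Map g J) := by
  have hdual : Function.Injective (J 0).dualMap :=
    dualMap_injective_iff.mpr (bijective_of_apply_apply_eq_smul (hε 0) (hJ2 0)).2
  exact (qk₂Map_injective hgnd hJ2 hε hanti).comp fun θ θ' h => hdual (congrFun h 0)

theorem qk₃Map_injective [FiniteDimensional ℝ V] (hgnd : ∀ X, (∀ Y, g Y X = 0) → X = 0)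
    (hJ2 : ∀ a X, J a (J a X) = ε a • X) (hε : ∀ a, ε a ^ 2 = 1)
    (hanti : Pairwise fun a b => ∀ X, J a (J b X) = -J b (J a X)) :
    Function.Injective (qk₃Map g J ε) := by
  refine (injective_iff_map_eq_zero _).mpr fun θ hθ => LinearMap.ext fun Z => ?_
  set L : Module.End ℝ V := θ Z • 1 - θ.smulRight Z
    - ∑ a, ε a • (θ (J a Z) • J a - (θ ∘ₗ J a).smulRight (J a Z))
  have hL : L = 0 := LinearMap.ext fun Y => hgnd _ fun X => by
    simpa [L, mul_comm] using congr($hθ X Y Z)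
  have hε0 a : ε a ≠ 0 := fun h => by simpa [h] using hε a
  have htrace : trace ℝ V L = (finrank ℝ V + 2) * θ Z := by
    simp [L, trace_eq_zero_of_anticomm hJ2 hε0 hanti, hJ2, Fin.sum_univ_three]
    linear_combination θ Z * (hε 0 + hε 1 + hε 2)
  have : ((finrank ℝ V : ℝ) + 2) * θ Z = 0 := by rw [← htrace, hL, map_zero]
  exact (mul_eq_zero.mp this).resolve_left (by positivity)

end LinearTypeForms

theorem stmt_5_general
    {V : Type*} [AddCommGroup V] [Module ℝ V] [FiniteDimensional ℝ V]
    (n : ℕ) (hdim : Module.finrank ℝ V = 4 * n)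
    (δ : ℝ) (hδ : δ = -1 ∨ δ = 1)
    (ε : Fin 3 → ℝ) (hε : ε = ![-1, δ, δ])
    (g : V →ₗ[ℝ] V →ₗ[ℝ] ℝ)
    (hgsymm : ∀ X Y : V, g X Y = g Y X)
    (hgnd : ∀ X : V, (∀ Y : V, g X Y = 0) → X = 0)
    (J : Fin 3 → V →ₗ[ℝ] V)
    (hJ2 : ∀ (a : Fin 3) (X : V), J a (J a X) = ε a • X)
    (hJ12 : ∀ X : V, J 0 (J 1 X) = J 2 X) :
    Set.finrank ℝ {S : V →ₗ[ℝ] V →ₗ[ℝ] V →ₗ[ℝ] ℝ |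
        ∃ θ : V →ₗ[ℝ] ℝ, ∀ X Y Z : V,
          S X Y Z = ∑ a : Fin 3, θ (J a X) * g (J a Y) Z} = 4 * n ∧
    Set.finrank ℝ {S : V →ₗ[ℝ] V →ₗ[ℝ] V →ₗ[ℝ] ℝ |
        ∃ θ : Fin 3 → V →ₗ[ℝ] ℝ, (∀ X : V, ∑ a : Fin 3, θ a (J a X) = 0) ∧
          ∀ X Y Z : V, S X Y Z = ∑ a : Fin 3, θ a X * g (J a Y) Z} = 8 * n ∧
    Set.finrank ℝ {S : V →ₗ[ℝ] V →ₗ[ℝ] V →ₗ[ℝ] ℝ |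
        ∃ θ : V →ₗ[ℝ] ℝ, ∀ X Y Z : V,
          S X Y Z = g X Y * θ Z - g X Z * θ Y
            - ∑ a : Fin 3, ε a * (g X (J a Y) * θ (J a Z)
                - g X (J a Z) * θ (J a Y))} = 4 * n := by
  simp only [← qk₁Map_apply, ← qk₂Map_apply, ← qk₃Map_apply, ← sumDualMap_apply]
  have hδ0 : δ ≠ 0 := by rcases hδ with rfl | rfl <;> norm_num
  have hεsq a : ε a ^ 2 = 1 := by fin_cases a <;> rcases hδ with rfl | rfl <;> simp [hε]
  have hε0 a : ε a ≠ 0 := fun h => by simpa [h] using hεsq a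
  have hanti := anticomm_of_mul_eq hJ2 hJ12 (by simp [hε]) (by simp [hε]) (by simp [hε, hδ0])
  have hgnd' X (h : ∀ Y, g Y X = 0) : X = 0 := hgnd X fun Y => (hgsymm X Y).trans (h Y)
  have hdual : finrank ℝ (V →ₗ[ℝ] ℝ) = 4 * n := by rw [finrank_linearMap_self, hdim]
  have hker : {θ | ∀ X, sumDualMap J θ X = 0} = ker (sumDualMap J) := by
    ext θ
    simp [LinearMap.ext_iff]
  refine ⟨?_, ?_, ?_⟩
  · rw [setOf_exists_forall_apply_eq,
      Set.finrank_range_of_injective (qk₁Map_injective hgnd hJ2 hε0 hanti), hdual]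
  · rw [setOf_exists_and_forall_apply_eq, hker,
      Set.finrank_image_of_injective (qk₂Map_injective hgnd hJ2 hε0 hanti),
      finrank_ker_sumDualMap (bijective_of_apply_apply_eq_smul (hε0 0) (hJ2 0)).1, hdim]
    ring
  · rw [setOf_exists_forall_apply_eq,
      Set.finrank_range_of_injective (qk₃Map_injective hgnd' hJ2 hεsq hanti), hdual]

/-- the dimensions of the linear-type modules `QK₁`, `QK₂`, `QK₃`
of trilinear forms are `4n`, `8n` and `4n` respectively. -/
theorem stmt_5
    {V : Type*} [AddCommGroup V] [Module ℝ V] [FiniteDimensional ℝ V]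
    (n : ℕ) (hn : 2 ≤ n) (hdim : Module.finrank ℝ V = 4 * n)
    (δ : ℝ) (hδ : δ = -1 ∨ δ = 1)
    (ε : Fin 3 → ℝ) (hε : ε = ![-1, δ, δ])
    (g : V →ₗ[ℝ] V →ₗ[ℝ] ℝ)
    (hgsymm : ∀ X Y : V, g X Y = g Y X)
    (hgnd : ∀ X : V, (∀ Y : V, g X Y = 0) → X = 0)
    (J : Fin 3 → V →ₗ[ℝ] V)
    (hJ2 : ∀ (a : Fin 3) (X : V), J a (J a X) = ε a • X)
    (hJ12 : ∀ X : V, J 0 (J 1 X) = J 2 X)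
    (hJskew : ∀ (a : Fin 3) (X Y : V), g (J a X) Y = - g X (J a Y)) :
    Set.finrank ℝ {S : V →ₗ[ℝ] V →ₗ[ℝ] V →ₗ[ℝ] ℝ |
        ∃ θ : V →ₗ[ℝ] ℝ, ∀ X Y Z : V,
          S X Y Z = ∑ a : Fin 3, θ (J a X) * g (J a Y) Z} = 4 * n ∧
    Set.finrank ℝ {S : V →ₗ[ℝ] V →ₗ[ℝ] V →ₗ[ℝ] ℝ |
        ∃ θ : Fin 3 → V →ₗ[ℝ] ℝ, (∀ X : V, ∑ a : Fin 3, θ a (J a X) = 0) ∧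
          ∀ X Y Z : V, S X Y Z = ∑ a : Fin 3, θ a X * g (J a Y) Z} = 8 * n ∧
    Set.finrank ℝ {S : V →ₗ[ℝ] V →ₗ[ℝ] V →ₗ[ℝ] ℝ |
        ∃ θ : V →ₗ[ℝ] ℝ, ∀ X Y Z : V,
          S X Y Z = g X Y * θ Z - g X Z * θ Y
            - ∑ a : Fin 3, ε a * (g X (J a Y) * θ (J a Z)
                - g X (J a Z) * θ (J a Y))} = 4 * n :=
  stmt_5_general n hdim δ hδ ε hε g hgsymm hgnd J hJ2 hJ12
end

section
/- Take δ = +1, i.e. (ε₁,ε₂,ε₃) = (−1,1,1), and let S_X Y = g(X,Y)ξ − g(Y,ξ)X − Σ_a ε_a·(g(J_aY,ξ)J_aX − g(X,J_aY)J_aξ) (linear type with ζ^a = 0). Then for all X, Y, W ∈ V: R^S_{XY}W = −g(ξ,ξ)·{g(X,W)Y − g(Y,W)X + Σ_a ε_a·(g(X,J_aW)J_aY − g(Y,J_aW)J_aX)} − 2·Σ_a ε_a·(g(ξ,J_aW)g(X,J_aY)ξ + g(ξ,W)g(X,J_aY)J_aξ) + 2·Σ_{(a,b,c)}(g(X,J_aY)g(ξ,J_cW)J_bξ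 − g(X,J_aY)g(ξ,J_bW)J_cξ), where Σ_{(a,b,c)} runs over the cyclic permutations of (1,2,3). -/
/-!
Direct expansion. By bilinearity both sides are combinations of `X, Y, W, ξ` and their images
under the `J_a` and the products `J_a J_b`; the latter reduce to `±J_c` or `±1` by the
split-quaternion relations, which all follow from `J₁² = -1`, `J₂² = J₃² = 1`, `J₁J₂ = J₃`.
Using the symmetry of `g` and the skew-adjointness of the `J_a` (in particular
`g(U, J_a U) = 0`), the coefficients become polynomials in the scalars `g(U, Z)`,
`g(U, J_a Z)`, and on both sides they agree.
-/

structure IsSplitQuaternionTriple {R : Type*} [Ring R] (i j k : R) : Prop where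
  i_mul_i : i * i = -1
  j_mul_j : j * j = 1
  k_mul_k : k * k = 1
  i_mul_j : i * j = k

namespace IsSplitQuaternionTriple

variable {R : Type*} [Ring R] {i j k : R}

theorem i_mul_k (h : IsSplitQuaternionTriple i j k) : i * k = -j := by
  rw [← h.i_mul_j, ← mul_assoc, h.i_mul_i, neg_one_mul]

theorem k_mul_j (h : IsSplitQuaternionTriple i j k) : k * j = i := by
  rw [← h.i_mul_j, mul_assoc, h.j_mul_j, mul_one]

theorem j_mul_i (h : IsSplitQuaternionTriple i j k) : j * i = -k :=
  calc j * i = -(i * i) * (j * i) * (j * j) := by rw [h.i_mul_i, h.j_mul_j]; noncomm_ring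
    _ = -(i * (k * k) * j) := by rw [← h.i_mul_j]; noncomm_ring
    _ = -k := by rw [h.k_mul_k, mul_one, h.i_mul_j]

theorem j_mul_k (h : IsSplitQuaternionTriple i j k) : j * k = -i := by
  rw [← h.i_mul_j, ← mul_assoc, h.j_mul_i, neg_mul, h.k_mul_j]

theorem k_mul_i (h : IsSplitQuaternionTriple i j k) : k * i = j := by
  rw [← h.i_mul_j, mul_assoc, h.j_mul_i, mul_neg, h.i_mul_k, neg_neg]

end IsSplitQuaternionTriple

section SkewAdjoint

variable {R M : Type*} [CommRing R] [AddCommGroup M] [Module R M]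
  {g : M →ₗ[R] M →ₗ[R] R} {f : Module.End R M}

theorem apply_skewAdjoint_swap (hg : ∀ x y, g x y = g y x) (hf : ∀ x y, g (f x) y = -g x (f y))
    (x y : M) : g x (f y) = -g y (f x) := by
  rw [hg, hf]

theorem apply_skewAdjoint_self [NoZeroDivisors R] [CharZero R] (hg : ∀ x y, g x y = g y x)
    (hf : ∀ x y, g (f x) y = -g x (f y)) (x : M) : g x (f x) = 0 :=
  CharZero.eq_neg_self_iff.mp (apply_skewAdjoint_swap hg hf x x)

end SkewAdjoint

theorem stmt_6_general
    {V : Type*} [AddCommGroup V] [Module ℝ V]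
    (ε : Fin 3 → ℝ) (hε : ε = ![-1, 1, 1])
    (g : V →ₗ[ℝ] V →ₗ[ℝ] ℝ)
    (hgsymm : ∀ X Y : V, g X Y = g Y X)
    (J : Fin 3 → V →ₗ[ℝ] V)
    (hJ2 : ∀ (a : Fin 3) (X : V), J a (J a X) = ε a • X)
    (hJ12 : ∀ X : V, J 0 (J 1 X) = J 2 X)
    (hJskew : ∀ (a : Fin 3) (X Y : V), g (J a X) Y = - g X (J a Y))
    (ξ : V) (S : V → V → V)
    (hS : ∀ X Y : V, S X Y =
      g X Y • ξ - g Y ξ • X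
        - ∑ a : Fin 3, ε a • (g (J a Y) ξ • J a X - g X (J a Y) • J a ξ)) :
    ∀ X Y W : V,
      S (S X Y - S Y X) W - S X (S Y W) + S Y (S X W)
        = -(g ξ ξ) • (g X W • Y - g Y W • X
              + ∑ a : Fin 3, ε a • (g X (J a W) • J a Y - g Y (J a W) • J a X))
          - (2 : ℝ) • (∑ a : Fin 3,
              ε a • ((g ξ (J a W) * g X (J a Y)) • ξ
                + (g ξ W * g X (J a Y)) • J a ξ))
          + (2 : ℝ) • (((g X (J 0 Y) * g ξ (J 2 W)) • J 1 ξ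
                - (g X (J 0 Y) * g ξ (J 1 W)) • J 2 ξ)
              + ((g X (J 1 Y) * g ξ (J 0 W)) • J 2 ξ
                - (g X (J 1 Y) * g ξ (J 2 W)) • J 0 ξ)
              + ((g X (J 2 Y) * g ξ (J 1 W)) • J 0 ξ
                - (g X (J 2 Y) * g ξ (J 0 W)) • J 1 ξ)) := by
  intro X Y W
  subst hε
  have hJ : IsSplitQuaternionTriple (J 0) (J 1) (J 2) :=
    { i_mul_i := LinearMap.ext fun Z => by simpa using hJ2 0 Z
      j_mul_j := LinearMap.ext fun Z => by simpa using hJ2 1 Z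
      k_mul_k := LinearMap.ext fun Z => by simpa using hJ2 2 Z
      i_mul_j := LinearMap.ext hJ12 }
  have swap (a : Fin 3) := apply_skewAdjoint_swap hgsymm (hJskew a)
  simp only [hS, Fin.sum_univ_three, Matrix.cons_val_zero, Matrix.cons_val_one,
    Matrix.cons_val_two, Matrix.tail_cons, Matrix.head_cons]
  -- `← Module.End.mul_apply` folds `J a (J b Z)` into `(J a * J b) Z`, where the relations of
  -- `hJ` apply; the instances of `swap` and `hgsymm` fix one ordering of the arguments of `g`.
  simp only [map_add, map_sub, map_smul, map_neg, LinearMap.add_apply, LinearMap.sub_apply,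
    LinearMap.smul_apply, LinearMap.neg_apply, smul_eq_mul, ← Module.End.mul_apply,
    hJ.i_mul_i, hJ.j_mul_j, hJ.k_mul_k, hJ.i_mul_j, hJ.i_mul_k, hJ.j_mul_i, hJ.j_mul_k,
    hJ.k_mul_i, hJ.k_mul_j, Module.End.one_apply, hJskew,
    apply_skewAdjoint_self hgsymm (hJskew _), swap _ Y X, swap _ ξ W, hgsymm Y X, hgsymm ξ W,
    neg_smul, one_smul, neg_neg, mul_neg, neg_mul, smul_neg, mul_zero, sub_zero, zero_sub,
    neg_zero]
  match_scalars <;> ring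

/-- the operator `R^S` of a non-degenerate homogeneous
para-quaternion Kähler structure of linear type (δ = +1, ζ^a = 0).
Indices `0,1,2` of `Fin 3` correspond to `1,2,3` of the paper; the last
summand is the sum over the cyclic permutations `(0,1,2), (1,2,0), (2,0,1)`. -/
theorem stmt_6
    {V : Type*} [AddCommGroup V] [Module ℝ V] [FiniteDimensional ℝ V]
    (ε : Fin 3 → ℝ) (hε : ε = ![-1, 1, 1])
    (g : V →ₗ[ℝ] V →ₗ[ℝ] ℝ)
    (hgsymm : ∀ X Y : V, g X Y = g Y X)
    (hgnd : ∀ X : V, (∀ Y : V, g X Y = 0) → X = 0)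
    (J : Fin 3 → V →ₗ[ℝ] V)
    (hJ2 : ∀ (a : Fin 3) (X : V), J a (J a X) = ε a • X)
    (hJ12 : ∀ X : V, J 0 (J 1 X) = J 2 X)
    (hJskew : ∀ (a : Fin 3) (X Y : V), g (J a X) Y = - g X (J a Y))
    (ξ : V) (S : V → V → V)
    (hS : ∀ X Y : V, S X Y =
      g X Y • ξ - g Y ξ • X
        - ∑ a : Fin 3, ε a • (g (J a Y) ξ • J a X - g X (J a Y) • J a ξ)) :
    ∀ X Y W : V,
      S (S X Y - S Y X) W - S X (S Y W) + S Y (S X W)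
        = -(g ξ ξ) • (g X W • Y - g Y W • X
              + ∑ a : Fin 3, ε a • (g X (J a W) • J a Y - g Y (J a W) • J a X))
          - (2 : ℝ) • (∑ a : Fin 3,
              ε a • ((g ξ (J a W) * g X (J a Y)) • ξ
                + (g ξ W * g X (J a Y)) • J a ξ))
          + (2 : ℝ) • (((g X (J 0 Y) * g ξ (J 2 W)) • J 1 ξ
                - (g X (J 0 Y) * g ξ (J 1 W)) • J 2 ξ)
              + ((g X (J 1 Y) * g ξ (J 0 W)) • J 2 ξ
                - (g X (J 1 Y) * g ξ (J 2 W)) • J 0 ξ)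
              + ((g X (J 2 Y) * g ξ (J 1 W)) • J 0 ξ
                - (g X (J 2 Y) * g ξ (J 0 W)) • J 1 ξ)) :=
  stmt_6_general ε hε g hgsymm J hJ2 hJ12 hJskew ξ S hS
end

section
/- Take δ = +1, i.e. (ε₁,ε₂,ε₃) = (−1,1,1), and let S_X Y = g(X,Y)ξ − g(Y,ξ)X − Σ_a ε_a·(g(J_aY,ξ)J_aX − g(X,J_aY)J_aξ). Let R_{XY}W be the unique vector with g(R_{XY}W, U) = −g(ξ,ξ)·R⁰(X,Y,W,U) for all U (constant ε-quaternion sectional curvature −4g(ξ,ξ), in the sign convention R_{XY}Z = ∇_{[X,Y]}Z − ∇_X∇_Y Z + ∇_Y∇_X Z). Then R̃ := R − R^S satisfies, for all X, Y, W ∈ V: R̃_{XY}W = −2·Σ_a ε_a·g(ξ,ξ)·g(X,J_aY)·J_aW + 2·Σ_{(a,b,c)} g(X,J_aY)·(ε_a g(ξ,J_aW)ξ + ε_a g(ξ,W)J_aξ − g(ξ,J_cW)J_bξ + g(ξ,J_bW)J_cξ), where Σ_{(a,b,c)} runs over the cyclic permutations of (1,2,3). -/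
/-!
Nondegeneracy of `g` turns the defining identity of `R` into an explicit formula for `R_{XY}W`.
Skew-adjointness of the `J_a` makes them pairwise anticommute, so all products `J_a J_b`
reduce to `±J_c` or multiples of the identity; expanding `R^S` with this multiplication table,
both sides become linear combinations of `ξ, X, Y, W` and their images under the `J_a`, with
coefficients polynomial in the pairings, and the identity is a normalization.
-/

open LinearMap (BilinForm)

theorem LinearMap.SeparatingLeft.eq_of_forall_apply_eq {R M N P : Type*} [CommRing R]
    [AddCommGroup M] [AddCommGroup N] [AddCommGroup P] [Module R M] [Module R N] [Module R P]
    {g : M →ₗ[R] N →ₗ[R] P} (hg : g.SeparatingLeft) {A B : M} (h : ∀ U, g A U = g B U) :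
    A = B :=
  LinearMap.ker_eq_bot.mp (LinearMap.separatingLeft_iff_ker_eq_bot.mp hg) (LinearMap.ext h)

section

variable {V : Type*} [AddCommGroup V] [Module ℝ V]

structure IsEpsQuaternionHermitian (ε : Fin 3 → ℝ) (g : BilinForm ℝ V)
    (J : Fin 3 → V →ₗ[ℝ] V) : Prop where
  symm : ∀ X Y, g X Y = g Y X
  separatingLeft : g.SeparatingLeft
  J_J : ∀ a X, J a (J a X) = ε a • X
  J_zero_J_one : ∀ X, J 0 (J 1 X) = J 2 X
  skew : ∀ a X Y, g (J a X) Y = -g X (J a Y)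

namespace IsEpsQuaternionHermitian

variable {ε : Fin 3 → ℝ} {g : BilinForm ℝ V} {J : Fin 3 → V →ₗ[ℝ] V}

theorem apply_J_swap (h : IsEpsQuaternionHermitian ε g J) (a : Fin 3) (X Y : V) :
    g X (J a Y) = -g Y (J a X) := by
  rw [← h.skew, h.symm]

theorem apply_J_self (h : IsEpsQuaternionHermitian ε g J) (a : Fin 3) (X : V) :
    g X (J a X) = 0 := by
  linarith [h.apply_J_swap a X X]

theorem J_one_J_zero (h : IsEpsQuaternionHermitian ε g J) (X : V) :
    J 1 (J 0 X) = -J 2 X :=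
  h.separatingLeft.eq_of_forall_apply_eq fun U => by
    simp [h.skew, h.J_zero_J_one]

theorem J_zero_J_two (h : IsEpsQuaternionHermitian ε g J) (X : V) :
    J 0 (J 2 X) = ε 0 • J 1 X := by
  rw [← h.J_zero_J_one, h.J_J]

theorem J_two_J_one (h : IsEpsQuaternionHermitian ε g J) (X : V) :
    J 2 (J 1 X) = ε 1 • J 0 X := by
  rw [← h.J_zero_J_one, h.J_J, map_smul]

theorem J_two_J_zero (h : IsEpsQuaternionHermitian ε g J) (X : V) :
    J 2 (J 0 X) = -ε 0 • J 1 X :=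
  h.separatingLeft.eq_of_forall_apply_eq fun U => by
    simp [h.skew, h.J_zero_J_two]

theorem J_one_J_two (h : IsEpsQuaternionHermitian ε g J) (X : V) :
    J 1 (J 2 X) = -ε 1 • J 0 X :=
  h.separatingLeft.eq_of_forall_apply_eq fun U => by
    simp [h.skew, h.J_two_J_one]

theorem curvature_eq_smul (h : IsEpsQuaternionHermitian ε g J) {ξ : V} {R0 : V → V → V → V → ℝ}
    (hR0 : ∀ X Y Z W : V, R0 X Y Z W =
      g X Z * g Y W - g Y Z * g X W
        - ∑ a : Fin 3, ε a * (g (J a X) Z * g (J a Y) W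
            - g (J a Y) Z * g (J a X) W + 2 * g X (J a Y) * g Z (J a W)))
    {R : V → V → V → V} (hR : ∀ X Y W U : V, g (R X Y W) U = -(g ξ ξ) * R0 X Y W U)
    (X Y W : V) :
    R X Y W = -g ξ ξ • (g X W • Y - g Y W • X
      - ∑ a : Fin 3, ε a • (g (J a X) W • J a Y - g (J a Y) W • J a X
        - (2 * g X (J a Y)) • J a W)) :=
  h.separatingLeft.eq_of_forall_apply_eq fun U => by
    simp only [hR, hR0, Fin.sum_univ_three, map_smul, map_add, map_sub, LinearMap.smul_apply,
      LinearMap.add_apply, LinearMap.sub_apply, smul_eq_mul, h.skew]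
    ring

end IsEpsQuaternionHermitian

end

theorem stmt_7_general
    {V : Type*} [AddCommGroup V] [Module ℝ V]
    (ε : Fin 3 → ℝ) (hε : ε = ![-1, 1, 1])
    (g : V →ₗ[ℝ] V →ₗ[ℝ] ℝ)
    (hgsymm : ∀ X Y : V, g X Y = g Y X)
    (hgnd : ∀ X : V, (∀ Y : V, g X Y = 0) → X = 0)
    (J : Fin 3 → V →ₗ[ℝ] V)
    (hJ2 : ∀ (a : Fin 3) (X : V), J a (J a X) = ε a • X)
    (hJ12 : ∀ X : V, J 0 (J 1 X) = J 2 X)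
    (hJskew : ∀ (a : Fin 3) (X Y : V), g (J a X) Y = - g X (J a Y))
    (ξ : V) (S : V → V → V)
    (hS : ∀ X Y : V, S X Y =
      g X Y • ξ - g Y ξ • X
        - ∑ a : Fin 3, ε a • (g (J a Y) ξ • J a X - g X (J a Y) • J a ξ))
    (R0 : V → V → V → V → ℝ)
    (hR0 : ∀ X Y Z W : V, R0 X Y Z W =
      g X Z * g Y W - g Y Z * g X W
        - ∑ a : Fin 3, ε a * (g (J a X) Z * g (J a Y) W
            - g (J a Y) Z * g (J a X) W + 2 * g X (J a Y) * g Z (J a W)))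
    (R : V → V → V → V)
    (hR : ∀ X Y W U : V, g (R X Y W) U = -(g ξ ξ) * R0 X Y W U) :
    ∀ X Y W : V,
      R X Y W - (S (S X Y - S Y X) W - S X (S Y W) + S Y (S X W))
        = (-2 : ℝ) • (∑ a : Fin 3, (ε a * g ξ ξ * g X (J a Y)) • J a W)
          + (2 : ℝ) • (g X (J 0 Y) • ((ε 0 * g ξ (J 0 W)) • ξ
                  + (ε 0 * g ξ W) • J 0 ξ
                  - g ξ (J 2 W) • J 1 ξ + g ξ (J 1 W) • J 2 ξ)
              + g X (J 1 Y) • ((ε 1 * g ξ (J 1 W)) • ξ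
                  + (ε 1 * g ξ W) • J 1 ξ
                  - g ξ (J 0 W) • J 2 ξ + g ξ (J 2 W) • J 0 ξ)
              + g X (J 2 Y) • ((ε 2 * g ξ (J 2 W)) • ξ
                  + (ε 2 * g ξ W) • J 2 ξ
                  - g ξ (J 1 W) • J 0 ξ + g ξ (J 0 W) • J 1 ξ)) := by
  have hq : IsEpsQuaternionHermitian ε g J := ⟨hgsymm, hgnd, hJ2, hJ12, hJskew⟩
  have e0 : ε 0 = -1 := by simp [hε]
  have e1 : ε 1 = 1 := by simp [hε]
  have e2 : ε 2 = 1 := by simp [hε]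
  intro X Y W
  rw [hq.curvature_eq_smul hR0 hR]
  -- The last two lines orient every pairing along `ξ < X < Y < W`, so that equal scalars
  -- become syntactically equal atoms for `module`.
  simp only [hS, Fin.sum_univ_three, map_add, map_sub, map_smul, map_neg, LinearMap.add_apply,
    LinearMap.sub_apply, LinearMap.smul_apply, smul_eq_mul, e0, e1, e2, hq.J_J, hq.J_zero_J_one,
    hq.J_one_J_zero, hq.J_zero_J_two, hq.J_two_J_zero, hq.J_two_J_one, hq.J_one_J_two, hq.skew,
    hq.apply_J_self, hgsymm X ξ, hgsymm Y ξ, hgsymm W ξ, hgsymm Y X,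
    hq.apply_J_swap _ X ξ, hq.apply_J_swap _ Y ξ, hq.apply_J_swap _ W ξ, hq.apply_J_swap _ Y X]
  module

/-- the tensor `R̃ = R − R^S` in the para-quaternion Kähler case
(δ = +1), where `R` has constant ε-quaternion sectional curvature `−4g(ξ,ξ)`.
Indices `0,1,2` of `Fin 3` correspond to `1,2,3` of the paper; the last
summand is the sum over the cyclic permutations `(0,1,2), (1,2,0), (2,0,1)`. -/
theorem stmt_7
    {V : Type*} [AddCommGroup V] [Module ℝ V] [FiniteDimensional ℝ V]
    (ε : Fin 3 → ℝ) (hε : ε = ![-1, 1, 1])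
    (g : V →ₗ[ℝ] V →ₗ[ℝ] ℝ)
    (hgsymm : ∀ X Y : V, g X Y = g Y X)
    (hgnd : ∀ X : V, (∀ Y : V, g X Y = 0) → X = 0)
    (J : Fin 3 → V →ₗ[ℝ] V)
    (hJ2 : ∀ (a : Fin 3) (X : V), J a (J a X) = ε a • X)
    (hJ12 : ∀ X : V, J 0 (J 1 X) = J 2 X)
    (hJskew : ∀ (a : Fin 3) (X Y : V), g (J a X) Y = - g X (J a Y))
    (ξ : V) (S : V → V → V)
    (hS : ∀ X Y : V, S X Y =
      g X Y • ξ - g Y ξ • X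
        - ∑ a : Fin 3, ε a • (g (J a Y) ξ • J a X - g X (J a Y) • J a ξ))
    (R0 : V → V → V → V → ℝ)
    (hR0 : ∀ X Y Z W : V, R0 X Y Z W =
      g X Z * g Y W - g Y Z * g X W
        - ∑ a : Fin 3, ε a * (g (J a X) Z * g (J a Y) W
            - g (J a Y) Z * g (J a X) W + 2 * g X (J a Y) * g Z (J a W)))
    (R : V → V → V → V)
    (hR : ∀ X Y W U : V, g (R X Y W) U = -(g ξ ξ) * R0 X Y W U) :
    ∀ X Y W : V,
      R X Y W - (S (S X Y - S Y X) W - S X (S Y W) + S Y (S X W))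
        = (-2 : ℝ) • (∑ a : Fin 3, (ε a * g ξ ξ * g X (J a Y)) • J a W)
          + (2 : ℝ) • (g X (J 0 Y) • ((ε 0 * g ξ (J 0 W)) • ξ
                  + (ε 0 * g ξ W) • J 0 ξ
                  - g ξ (J 2 W) • J 1 ξ + g ξ (J 1 W) • J 2 ξ)
              + g X (J 1 Y) • ((ε 1 * g ξ (J 1 W)) • ξ
                  + (ε 1 * g ξ W) • J 1 ξ
                  - g ξ (J 0 W) • J 2 ξ + g ξ (J 2 W) • J 0 ξ)
              + g X (J 2 Y) • ((ε 2 * g ξ (J 2 W)) • ξ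
                  + (ε 2 * g ξ W) • J 2 ξ
                  - g ξ (J 1 W) • J 0 ξ + g ξ (J 0 W) • J 1 ξ)) :=
  stmt_7_general ε hε g hgsymm hgnd J hJ2 hJ12 hJskew ξ S hS R0 hR0 R hR
end

section
/- Take δ = +1, i.e. (ε₁,ε₂,ε₃) = (−1,1,1), S_X Y = g(X,Y)ξ − g(Y,ξ)X − Σ_a ε_a·(g(J_aY,ξ)J_aX − g(X,J_aY)J_aξ), R determined by g(R_{XY}W, U) = −g(ξ,ξ)·R⁰(X,Y,W,U), and R̃ := R − R^S. Then for all X, Y ∈ V: R̃_{XY}ξ = 0; R̃_{XY}(J₁ξ) = 4g(ξ,ξ)·(g(X,J₂Y)J₃ξ − g(X,J₃Y)J₂ξ); R̃_{XY}(J₂ξ) = 4g(ξ,ξ)·(g(X,J₁Y)J₃ξ − g(X,J₃Y)J₁ξ); R̃_{XY}(J₃ξ) = 4g(ξ,ξ)·(g(X,J₂Y)J₁ξ − g(X,J₁Y)J₂ξ); and for every Z ∈ V with g(Z,ξ) = g(Z,J₁ξ) = g(Z,J₂ξ) = g(Z,J₃ξ) = 0: R̃_{XY}Z = −2g(ξ,ξ)·Σ_a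 ε_a·g(X,J_aY)·J_aZ. -/
/-!
Write `Ω_{XY} := Σ_a ε_a g(X, J_a Y) J_a`. Pairing with an arbitrary vector and normalising with
the para-quaternion relations shows that, for every `W`,
`R̃_{XY} W = -2 g(ξ,ξ) Ω_{XY} W + 2 g(W,ξ) Ω_{XY} ξ - 2 Σ_b ε_b g(W, J_b ξ) J_b Ω_{XY} ξ`.
Since `g(ξ, J_a ξ) = 0` and `g(J_a ξ, J_b ξ) = -δ_{ab} ε_a g(ξ,ξ)`, this gives `R̃_{XY} ξ = 0`,
`R̃_{XY} Z = -2 g(ξ,ξ) Ω_{XY} Z` for `Z ⊥ ξ, J_a ξ`, and `R̃_{XY} (J_b ξ) = 2 g(ξ,ξ) [J_b, Ω_{XY}] ξ`,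
which the commutators `[J_a, J_b]` evaluate.
-/

def curvatureOf {V : Type*} [AddCommGroup V] (S : V → V → V) (X Y Z : V) : V :=
  S (S X Y - S Y X) Z - S X (S Y Z) + S Y (S X Z)

-- `J 0, J 1, J 2` are the paper's `J₁, J₂, J₃`.
structure ParaQuaternionHermitian (V : Type*) [AddCommGroup V] [Module ℝ V] where
  g : V →ₗ[ℝ] V →ₗ[ℝ] ℝ
  g_comm : ∀ X Y, g X Y = g Y X
  g_nondegenerate : ∀ X, (∀ Y, g X Y = 0) → X = 0
  J : Fin 3 → V →ₗ[ℝ] V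
  J_J : ∀ a X, J a (J a X) = (![-1, 1, 1] : Fin 3 → ℝ) a • X
  J_zero_J_one : ∀ X, J 0 (J 1 X) = J 2 X
  g_J : ∀ a X Y, g (J a X) Y = - g X (J a Y)

namespace ParaQuaternionHermitian

variable {V : Type*} [AddCommGroup V] [Module ℝ V] (P : ParaQuaternionHermitian V)

attribute [simp] J_zero_J_one g_J

lemma eq_of_g_eq {A B : V} (h : ∀ U, P.g A U = P.g B U) : A = B :=
  sub_eq_zero.mp <| P.g_nondegenerate _ fun U => by simp [h]

@[simp] lemma J_zero_J_zero (X : V) : P.J 0 (P.J 0 X) = -X := by simpa using P.J_J 0 X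

@[simp] lemma J_one_J_one (X : V) : P.J 1 (P.J 1 X) = X := by simpa using P.J_J 1 X

@[simp] lemma J_two_J_two (X : V) : P.J 2 (P.J 2 X) = X := by simpa using P.J_J 2 X

@[simp] lemma J_zero_J_two (X : V) : P.J 0 (P.J 2 X) = -P.J 1 X := by
  rw [← J_zero_J_one, J_zero_J_zero]

@[simp] lemma J_two_J_one (X : V) : P.J 2 (P.J 1 X) = P.J 0 X := by
  rw [← J_zero_J_one, J_one_J_one]

-- the skew-adjoint `J₁, J₂` anticommute because their product `J₃` is skew-adjoint as well
@[simp] lemma J_one_J_zero (X : V) : P.J 1 (P.J 0 X) = -P.J 2 X :=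
  P.eq_of_g_eq fun U => by simp

@[simp] lemma J_one_J_two (X : V) : P.J 1 (P.J 2 X) = -P.J 0 X := by
  rw [← J_zero_J_one, J_one_J_zero, J_two_J_one]

@[simp] lemma J_two_J_zero (X : V) : P.J 2 (P.J 0 X) = P.J 1 X := by
  rw [← J_zero_J_one]; simp

@[simp] lemma g_J_self (a : Fin 3) (X : V) : P.g X (P.J a X) = 0 := by
  linarith [P.g_J a X X, P.g_comm (P.J a X) X]

lemma g_J_swap (a : Fin 3) (X Y : V) : P.g Y (P.J a X) = -P.g X (P.J a Y) := by
  rw [P.g_comm, g_J]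

local notation "ε" => (![-1, 1, 1] : Fin 3 → ℝ)

def S (ξ X Y : V) : V :=
  P.g X Y • ξ - P.g Y ξ • X
    - ∑ a : Fin 3, ε a • (P.g (P.J a Y) ξ • P.J a X - P.g X (P.J a Y) • P.J a ξ)

def R0 (X Y Z W : V) : ℝ :=
  P.g X Z * P.g Y W - P.g Y Z * P.g X W
    - ∑ a : Fin 3, ε a * (P.g (P.J a X) Z * P.g (P.J a Y) W
        - P.g (P.J a Y) Z * P.g (P.J a X) W + 2 * P.g X (P.J a Y) * P.g Z (P.J a W))

def fundamentalOp (X Y W : V) : V := ∑ a : Fin 3, (ε a * P.g X (P.J a Y)) • P.J a W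

theorem sub_curvatureOf_S {R : V → V → V → V} {ξ : V}
    (hR : ∀ X Y W U, P.g (R X Y W) U = -(P.g ξ ξ) * P.R0 X Y W U) (X Y W : V) :
    R X Y W - curvatureOf (P.S ξ) X Y W =
      -(2 * P.g ξ ξ) • P.fundamentalOp X Y W + (2 * P.g W ξ) • P.fundamentalOp X Y ξ
        - ∑ b : Fin 3, (2 * ε b * P.g W (P.J b ξ)) • P.J b (P.fundamentalOp X Y ξ) := by
  refine P.eq_of_g_eq fun U => ?_
  -- the `g_J_swap`, `g_comm` instances put the arguments of `g` in a fixed order, so that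
  -- `ring` compares normal forms
  simp only [curvatureOf, S, R0, fundamentalOp, hR, Fin.sum_univ_three, Matrix.cons_val_zero,
    Matrix.cons_val_one, Matrix.cons_val_two, Matrix.tail_cons, Matrix.head_cons, map_add,
    map_sub, map_neg, map_smul, LinearMap.add_apply, LinearMap.sub_apply, LinearMap.neg_apply,
    LinearMap.smul_apply, smul_eq_mul, neg_smul, one_smul, neg_neg, g_J, J_zero_J_zero,
    J_one_J_one, J_two_J_two, J_zero_J_one, J_zero_J_two, J_one_J_zero, J_one_J_two,
    J_two_J_zero, J_two_J_one, g_J_self, P.g_J_swap _ X Y, P.g_J_swap _ W ξ, P.g_J_swap _ U ξ,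
    P.g_comm Y X, P.g_comm ξ W, P.g_comm ξ U]
  ring

section

variable {R : V → V → V → V} {ξ : V}

theorem sub_curvatureOf_S_self
    (hR : ∀ X Y W U, P.g (R X Y W) U = -(P.g ξ ξ) * P.R0 X Y W U) (X Y : V) :
    R X Y ξ - curvatureOf (P.S ξ) X Y ξ = 0 := by
  simp [P.sub_curvatureOf_S hR]

theorem sub_curvatureOf_S_J
    (hR : ∀ X Y W U, P.g (R X Y W) U = -(P.g ξ ξ) * P.R0 X Y W U) (X Y : V) (b : Fin 3) :
    R X Y (P.J b ξ) - curvatureOf (P.S ξ) X Y (P.J b ξ) =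
      (2 * P.g ξ ξ) • (P.J b (P.fundamentalOp X Y ξ) - P.fundamentalOp X Y (P.J b ξ)) := by
  rw [P.sub_curvatureOf_S hR]
  fin_cases b <;> simp [Fin.sum_univ_three] <;> module

theorem sub_curvatureOf_S_J_zero
    (hR : ∀ X Y W U, P.g (R X Y W) U = -(P.g ξ ξ) * P.R0 X Y W U) (X Y : V) :
    R X Y (P.J 0 ξ) - curvatureOf (P.S ξ) X Y (P.J 0 ξ) =
      (4 * P.g ξ ξ) • (P.g X (P.J 1 Y) • P.J 2 ξ - P.g X (P.J 2 Y) • P.J 1 ξ) := by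
  rw [P.sub_curvatureOf_S_J hR]
  simp [fundamentalOp, Fin.sum_univ_three]
  module

theorem sub_curvatureOf_S_J_one
    (hR : ∀ X Y W U, P.g (R X Y W) U = -(P.g ξ ξ) * P.R0 X Y W U) (X Y : V) :
    R X Y (P.J 1 ξ) - curvatureOf (P.S ξ) X Y (P.J 1 ξ) =
      (4 * P.g ξ ξ) • (P.g X (P.J 0 Y) • P.J 2 ξ - P.g X (P.J 2 Y) • P.J 0 ξ) := by
  rw [P.sub_curvatureOf_S_J hR]
  simp [fundamentalOp, Fin.sum_univ_three]
  module

theorem sub_curvatureOf_S_J_two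
    (hR : ∀ X Y W U, P.g (R X Y W) U = -(P.g ξ ξ) * P.R0 X Y W U) (X Y : V) :
    R X Y (P.J 2 ξ) - curvatureOf (P.S ξ) X Y (P.J 2 ξ) =
      (4 * P.g ξ ξ) • (P.g X (P.J 1 Y) • P.J 0 ξ - P.g X (P.J 0 Y) • P.J 1 ξ) := by
  rw [P.sub_curvatureOf_S_J hR]
  simp [fundamentalOp, Fin.sum_univ_three]
  module

theorem sub_curvatureOf_S_of_orthogonal
    (hR : ∀ X Y W U, P.g (R X Y W) U = -(P.g ξ ξ) * P.R0 X Y W U) (X Y : V) {Z : V}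
    (hZξ : P.g Z ξ = 0) (hZJξ : ∀ a, P.g Z (P.J a ξ) = 0) :
    R X Y Z - curvatureOf (P.S ξ) X Y Z = -(2 * P.g ξ ξ) • P.fundamentalOp X Y Z := by
  simp [P.sub_curvatureOf_S hR, hZξ, hZJξ]

end

end ParaQuaternionHermitian

theorem stmt_8_general
    {V : Type*} [AddCommGroup V] [Module ℝ V]
    (ε : Fin 3 → ℝ) (hε : ε = ![-1, 1, 1])
    (g : V →ₗ[ℝ] V →ₗ[ℝ] ℝ)
    (hgsymm : ∀ X Y : V, g X Y = g Y X)
    (hgnd : ∀ X : V, (∀ Y : V, g X Y = 0) → X = 0)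
    (J : Fin 3 → V →ₗ[ℝ] V)
    (hJ2 : ∀ (a : Fin 3) (X : V), J a (J a X) = ε a • X)
    (hJ12 : ∀ X : V, J 0 (J 1 X) = J 2 X)
    (hJskew : ∀ (a : Fin 3) (X Y : V), g (J a X) Y = - g X (J a Y))
    (ξ : V) (S : V → V → V)
    (hS : ∀ X Y : V, S X Y =
      g X Y • ξ - g Y ξ • X
        - ∑ a : Fin 3, ε a • (g (J a Y) ξ • J a X - g X (J a Y) • J a ξ))
    (R0 : V → V → V → V → ℝ)
    (hR0 : ∀ X Y Z W : V, R0 X Y Z W =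
      g X Z * g Y W - g Y Z * g X W
        - ∑ a : Fin 3, ε a * (g (J a X) Z * g (J a Y) W
            - g (J a Y) Z * g (J a X) W + 2 * g X (J a Y) * g Z (J a W)))
    (R : V → V → V → V)
    (hR : ∀ X Y W U : V, g (R X Y W) U = -(g ξ ξ) * R0 X Y W U)
    (Rt : V → V → V → V)
    (hRt : ∀ X Y W : V, Rt X Y W =
      R X Y W - (S (S X Y - S Y X) W - S X (S Y W) + S Y (S X W))) :
    (∀ X Y : V, Rt X Y ξ = 0) ∧
    (∀ X Y : V, Rt X Y (J 0 ξ)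
        = (4 * g ξ ξ) • (g X (J 1 Y) • J 2 ξ - g X (J 2 Y) • J 1 ξ)) ∧
    (∀ X Y : V, Rt X Y (J 1 ξ)
        = (4 * g ξ ξ) • (g X (J 0 Y) • J 2 ξ - g X (J 2 Y) • J 0 ξ)) ∧
    (∀ X Y : V, Rt X Y (J 2 ξ)
        = (4 * g ξ ξ) • (g X (J 1 Y) • J 0 ξ - g X (J 0 Y) • J 1 ξ)) ∧
    (∀ X Y Z : V, g Z ξ = 0 → g Z (J 0 ξ) = 0 → g Z (J 1 ξ) = 0 →
      g Z (J 2 ξ) = 0 →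
      Rt X Y Z = (-(2 * g ξ ξ)) • ∑ a : Fin 3, (ε a * g X (J a Y)) • J a Z) := by
  subst hε
  let P : ParaQuaternionHermitian V := ⟨g, hgsymm, hgnd, J, hJ2, hJ12, hJskew⟩
  obtain rfl : S = P.S ξ := funext₂ hS
  obtain rfl : R0 = P.R0 := funext fun X => funext fun Y => funext₂ (hR0 X Y)
  obtain rfl : Rt = fun X Y W => R X Y W - curvatureOf (P.S ξ) X Y W :=
    funext fun X => funext₂ (hRt X)
  refine ⟨P.sub_curvatureOf_S_self hR, P.sub_curvatureOf_S_J_zero hR,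
    P.sub_curvatureOf_S_J_one hR, P.sub_curvatureOf_S_J_two hR, ?_⟩
  intro X Y Z hZξ hZ0 hZ1 hZ2
  exact P.sub_curvatureOf_S_of_orthogonal hR X Y hZξ fun a => by fin_cases a <;> assumption

/-- action of `R̃ = R − R^S` on `ξ`, `J_aξ` and on `(H̃ξ)^⊥`
in the para-quaternion Kähler case (δ = +1).  Indices `0,1,2` of `Fin 3`
correspond to `1,2,3` of the paper. -/
theorem stmt_8
    {V : Type*} [AddCommGroup V] [Module ℝ V] [FiniteDimensional ℝ V]
    (ε : Fin 3 → ℝ) (hε : ε = ![-1, 1, 1])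
    (g : V →ₗ[ℝ] V →ₗ[ℝ] ℝ)
    (hgsymm : ∀ X Y : V, g X Y = g Y X)
    (hgnd : ∀ X : V, (∀ Y : V, g X Y = 0) → X = 0)
    (J : Fin 3 → V →ₗ[ℝ] V)
    (hJ2 : ∀ (a : Fin 3) (X : V), J a (J a X) = ε a • X)
    (hJ12 : ∀ X : V, J 0 (J 1 X) = J 2 X)
    (hJskew : ∀ (a : Fin 3) (X Y : V), g (J a X) Y = - g X (J a Y))
    (ξ : V) (S : V → V → V)
    (hS : ∀ X Y : V, S X Y =
      g X Y • ξ - g Y ξ • X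
        - ∑ a : Fin 3, ε a • (g (J a Y) ξ • J a X - g X (J a Y) • J a ξ))
    (R0 : V → V → V → V → ℝ)
    (hR0 : ∀ X Y Z W : V, R0 X Y Z W =
      g X Z * g Y W - g Y Z * g X W
        - ∑ a : Fin 3, ε a * (g (J a X) Z * g (J a Y) W
            - g (J a Y) Z * g (J a X) W + 2 * g X (J a Y) * g Z (J a W)))
    (R : V → V → V → V)
    (hR : ∀ X Y W U : V, g (R X Y W) U = -(g ξ ξ) * R0 X Y W U)
    (Rt : V → V → V → V)
    (hRt : ∀ X Y W : V, Rt X Y W =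
      R X Y W - (S (S X Y - S Y X) W - S X (S Y W) + S Y (S X W))) :
    (∀ X Y : V, Rt X Y ξ = 0) ∧
    (∀ X Y : V, Rt X Y (J 0 ξ)
        = (4 * g ξ ξ) • (g X (J 1 Y) • J 2 ξ - g X (J 2 Y) • J 1 ξ)) ∧
    (∀ X Y : V, Rt X Y (J 1 ξ)
        = (4 * g ξ ξ) • (g X (J 0 Y) • J 2 ξ - g X (J 2 Y) • J 0 ξ)) ∧
    (∀ X Y : V, Rt X Y (J 2 ξ)
        = (4 * g ξ ξ) • (g X (J 1 Y) • J 0 ξ - g X (J 0 Y) • J 1 ξ)) ∧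
    (∀ X Y Z : V, g Z ξ = 0 → g Z (J 0 ξ) = 0 → g Z (J 1 ξ) = 0 →
      g Z (J 2 ξ) = 0 →
      Rt X Y Z = (-(2 * g ξ ξ)) • ∑ a : Fin 3, (ε a * g X (J a Y)) • J a Z) :=
  stmt_8_general ε hε g hgsymm hgnd J hJ2 hJ12 hJskew ξ S hS R0 hR0 R hR Rt hRt
end

section
/- Take δ = −1, i.e. (ε₁,ε₂,ε₃) = (−1,−1,−1), S_X Y = g(X,Y)ξ − g(Y,ξ)X − Σ_a ε_a·(g(J_aY,ξ)J_aX − g(X,J_aY)J_aξ), R determined by g(R_{XY}W, U) = −g(ξ,ξ)·R⁰(X,Y,W,U), and R̃ := R − R^S. Then for all X, Y ∈ V: R̃_{XY}ξ = 0; R̃_{XY}(J₁ξ) = −4g(ξ,ξ)·(g(J₃X,Y)J₂ξ − g(J₂X,Y)J₃ξ); R̃_{XY}(J₂ξ) = −4g(ξ,ξ)·(g(J₁X,Y)J₃ξ − g(J₃X,Y)J₁ξ); R̃_{XY}(J₃ξ) = −4g(ξ,ξ)·(g(J₂X,Y)J₁ξ − g(J₁X,Y)J₂ξ); and for every Z ∈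 V with g(Z,ξ) = g(Z,J₁ξ) = g(Z,J₂ξ) = g(Z,J₃ξ) = 0: R̃_{XY}Z = −2g(ξ,ξ)·Σ_a g(J_aX,Y)·J_aZ. -/
/-!
Expanding `S` and `R` with the quaternion relations gives a closed form of `R̃_{XY}W` for arbitrary
`W`: writing `ω_a(X, Y) = g(J_a X, Y)`, it is `-2 g(ξ,ξ) Σ_a ω_a(X, Y) J_a W` plus terms that see
`W` only through `g(W, ξ)` and `g(J_b W, ξ)`. These terms vanish on `(Hξ)^⊥`, and at `ξ` and
`J_a ξ` the quaternion multiplication table evaluates them.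
-/

section Quaternion

variable {𝕜 V : Type*} [Ring 𝕜] [AddCommGroup V] [Module 𝕜 V] {J : Fin 3 → V →ₗ[𝕜] V}
  (hJ2 : ∀ a X, J a (J a X) = -X) (hJ12 : ∀ X, J 0 (J 1 X) = J 2 X)
include hJ2 hJ12

theorem J_one_J_zero_J_one (X : V) : J 1 (J 0 (J 1 X)) = J 0 X := by
  have h : J 0 (J 0 (J 1 (J 0 (J 1 X)))) = J 0 (-X) := by rw [hJ12, hJ12, hJ2]
  rwa [hJ2, map_neg, neg_inj] at h

theorem J_one_J_zero (X : V) : J 1 (J 0 X) = -J 2 X := by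
  have h := J_one_J_zero_J_one hJ2 hJ12 (J 1 X)
  rw [hJ2, map_neg, map_neg, hJ12] at h
  rw [← h, neg_neg]

theorem J_zero_J_two (X : V) : J 0 (J 2 X) = -J 1 X := by
  rw [← hJ12, hJ2]

theorem J_two_J_zero (X : V) : J 2 (J 0 X) = J 1 X := by
  rw [← hJ12, J_one_J_zero hJ2 hJ12, map_neg, J_zero_J_two hJ2 hJ12, neg_neg]

theorem J_one_J_two (X : V) : J 1 (J 2 X) = J 0 X := by
  rw [← hJ12, J_one_J_zero_J_one hJ2 hJ12]

theorem J_two_J_one (X : V) : J 2 (J 1 X) = -J 0 X := by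
  rw [← hJ12, hJ2, map_neg]

end Quaternion

section Metric

variable {V : Type*} [AddCommGroup V] [Module ℝ V] {g : V →ₗ[ℝ] V →ₗ[ℝ] ℝ}
  {J : Fin 3 → V →ₗ[ℝ] V}

theorem apply_J_swap (hgsymm : ∀ X Y, g X Y = g Y X)
    (hJskew : ∀ a X Y, g (J a X) Y = -g X (J a Y)) (a : Fin 3) (X Y : V) :
    g Y (J a X) = -g X (J a Y) := by
  rw [hgsymm, hJskew]

theorem apply_self_J (hgsymm : ∀ X Y, g X Y = g Y X)
    (hJskew : ∀ a X Y, g (J a X) Y = -g X (J a Y)) (a : Fin 3) (X : V) : g X (J a X) = 0 := by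
  have h := apply_J_swap hgsymm hJskew a X X
  linarith

theorem curvature_eq (hgnd : ∀ X, (∀ Y, g X Y = 0) → X = 0)
    (hJskew : ∀ a X Y, g (J a X) Y = -g X (J a Y)) (ε : Fin 3 → ℝ) (ξ : V)
    (R0 : V → V → V → V → ℝ)
    (hR0 : ∀ X Y Z W : V, R0 X Y Z W =
      g X Z * g Y W - g Y Z * g X W
        - ∑ a : Fin 3, ε a * (g (J a X) Z * g (J a Y) W
            - g (J a Y) Z * g (J a X) W + 2 * g X (J a Y) * g Z (J a W)))
    (R : V → V → V → V) (hR : ∀ X Y W U : V, g (R X Y W) U = -(g ξ ξ) * R0 X Y W U)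
    (X Y W : V) :
    R X Y W = (-(g ξ ξ)) • (g X W • Y - g Y W • X
      - ∑ a, ε a • (g (J a X) W • J a Y - g (J a Y) W • J a X - (2 * g X (J a Y)) • J a W)) := by
  refine sub_eq_zero.mp (hgnd _ fun U => ?_)
  simp only [Fin.sum_univ_three, map_add, map_sub, map_smul, LinearMap.add_apply,
    LinearMap.sub_apply, LinearMap.smul_apply, smul_eq_mul, hR, hR0, hJskew]
  ring

variable (hgsymm : ∀ X Y, g X Y = g Y X)
  (hJ2 : ∀ a X, J a (J a X) = -X) (hJ12 : ∀ X, J 0 (J 1 X) = J 2 X)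
  (hJskew : ∀ a X Y, g (J a X) Y = -g X (J a Y)) {ξ : V} {S : V → V → V}
  (hS : ∀ X Y : V, S X Y =
    g X Y • ξ - g Y ξ • X + ∑ a : Fin 3, (g (J a Y) ξ • J a X - g X (J a Y) • J a ξ))
  {R : V → V → V → V}
  (hR : ∀ X Y W : V, R X Y W = (-(g ξ ξ)) • (g X W • Y - g Y W • X
    + ∑ a, (g (J a X) W • J a Y - g (J a Y) W • J a X - (2 * g X (J a Y)) • J a W)))
include hgsymm hJ2 hJ12 hJskew hS hR

theorem curvature_sub_curvatureOf (X Y W : V) :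
    R X Y W - curvatureOf S X Y W = (-(2 * g ξ ξ)) • ∑ a, g (J a X) Y • J a W
      + (2 : ℝ) • ∑ a, g (J a X) Y • (g (J a W) ξ • ξ + g W ξ • J a ξ
          + g (J (a + 1) W) ξ • J (a + 2) ξ - g (J (a + 2) W) ξ • J (a + 1) ξ) := by
  have swap := apply_J_swap hgsymm hJskew
  rw [hR, curvatureOf]
  simp only [hS, Fin.sum_univ_three, Fin.reduceAdd, map_add, map_sub, map_neg, map_smul,
    smul_eq_mul, LinearMap.add_apply, LinearMap.sub_apply, LinearMap.smul_apply,
    hJ2, hJ12, J_one_J_zero hJ2 hJ12, J_zero_J_two hJ2 hJ12, J_two_J_zero hJ2 hJ12,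
    J_one_J_two hJ2 hJ12, J_two_J_one hJ2 hJ12, hJskew, apply_self_J hgsymm hJskew,
    fun a => swap a X Y, fun a => swap a W ξ, hgsymm Y X, hgsymm ξ W]
  module

theorem curvature_sub_curvatureOf_xi (X Y : V) : R X Y ξ - curvatureOf S X Y ξ = 0 := by
  rw [curvature_sub_curvatureOf hgsymm hJ2 hJ12 hJskew hS hR]
  simp only [Fin.sum_univ_three, Fin.reduceAdd, hJskew, apply_self_J hgsymm hJskew]
  module

theorem curvature_sub_curvatureOf_J_xi (a : Fin 3) (X Y : V) :
    R X Y (J a ξ) - curvatureOf S X Y (J a ξ)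
      = (-(4 * g ξ ξ)) • (g (J (a + 2) X) Y • J (a + 1) ξ - g (J (a + 1) X) Y • J (a + 2) ξ) := by
  rw [curvature_sub_curvatureOf hgsymm hJ2 hJ12 hJskew hS hR]
  fin_cases a <;>
  · simp only [Fin.sum_univ_three, Fin.reduceAdd, Fin.reduceFinMk,
      hJ2, hJ12, J_one_J_zero hJ2 hJ12, J_zero_J_two hJ2 hJ12, J_two_J_zero hJ2 hJ12,
      J_one_J_two hJ2 hJ12, J_two_J_one hJ2 hJ12, hJskew, map_neg, apply_self_J hgsymm hJskew]
    module

theorem curvature_sub_curvatureOf_of_orthogonal (X Y Z : V) (hZ : g Z ξ = 0)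
    (hZJ : ∀ a, g Z (J a ξ) = 0) :
    R X Y Z - curvatureOf S X Y Z = (-(2 * g ξ ξ)) • ∑ a, g (J a X) Y • J a Z := by
  rw [curvature_sub_curvatureOf hgsymm hJ2 hJ12 hJskew hS hR]
  simp only [hJskew, hZ, hZJ, neg_zero, zero_smul, add_zero, sub_zero, smul_zero,
    Finset.sum_const_zero]

end Metric

theorem stmt_11_general
    {V : Type*} [AddCommGroup V] [Module ℝ V]
    (ε : Fin 3 → ℝ) (hε : ε = ![-1, -1, -1])
    (g : V →ₗ[ℝ] V →ₗ[ℝ] ℝ)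
    (hgsymm : ∀ X Y : V, g X Y = g Y X)
    (hgnd : ∀ X : V, (∀ Y : V, g X Y = 0) → X = 0)
    (J : Fin 3 → V →ₗ[ℝ] V)
    (hJ2 : ∀ (a : Fin 3) (X : V), J a (J a X) = ε a • X)
    (hJ12 : ∀ X : V, J 0 (J 1 X) = J 2 X)
    (hJskew : ∀ (a : Fin 3) (X Y : V), g (J a X) Y = - g X (J a Y))
    (ξ : V) (S : V → V → V)
    (hS : ∀ X Y : V, S X Y =
      g X Y • ξ - g Y ξ • X
        - ∑ a : Fin 3, ε a • (g (J a Y) ξ • J a X - g X (J a Y) • J a ξ))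
    (R0 : V → V → V → V → ℝ)
    (hR0 : ∀ X Y Z W : V, R0 X Y Z W =
      g X Z * g Y W - g Y Z * g X W
        - ∑ a : Fin 3, ε a * (g (J a X) Z * g (J a Y) W
            - g (J a Y) Z * g (J a X) W + 2 * g X (J a Y) * g Z (J a W)))
    (R : V → V → V → V)
    (hR : ∀ X Y W U : V, g (R X Y W) U = -(g ξ ξ) * R0 X Y W U)
    (Rt : V → V → V → V)
    (hRt : ∀ X Y W : V, Rt X Y W =
      R X Y W - (S (S X Y - S Y X) W - S X (S Y W) + S Y (S X W))) :
    (∀ X Y : V, Rt X Y ξ = 0) ∧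
    (∀ X Y : V, Rt X Y (J 0 ξ)
        = (-(4 * g ξ ξ)) • (g (J 2 X) Y • J 1 ξ - g (J 1 X) Y • J 2 ξ)) ∧
    (∀ X Y : V, Rt X Y (J 1 ξ)
        = (-(4 * g ξ ξ)) • (g (J 0 X) Y • J 2 ξ - g (J 2 X) Y • J 0 ξ)) ∧
    (∀ X Y : V, Rt X Y (J 2 ξ)
        = (-(4 * g ξ ξ)) • (g (J 1 X) Y • J 0 ξ - g (J 0 X) Y • J 1 ξ)) ∧
    (∀ X Y Z : V, g Z ξ = 0 → g Z (J 0 ξ) = 0 → g Z (J 1 ξ) = 0 →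
      g Z (J 2 ξ) = 0 →
      Rt X Y Z = (-(2 * g ξ ξ)) • ∑ a : Fin 3, g (J a X) Y • J a Z) := by
  have hεa : ∀ a, ε a = -1 := by subst hε; intro a; fin_cases a <;> rfl
  have hJ2' : ∀ a X, J a (J a X) = -X := by simp only [hJ2, hεa, neg_one_smul, implies_true]
  have hS' : ∀ X Y : V, S X Y =
      g X Y • ξ - g Y ξ • X + ∑ a : Fin 3, (g (J a Y) ξ • J a X - g X (J a Y) • J a ξ) := by
    simp only [hS, hεa, neg_one_smul, Finset.sum_neg_distrib, sub_neg_eq_add, implies_true]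
  have hR' : ∀ X Y W : V, R X Y W = (-(g ξ ξ)) • (g X W • Y - g Y W • X
      + ∑ a, (g (J a X) W • J a Y - g (J a Y) W • J a X - (2 * g X (J a Y)) • J a W)) := by
    simp only [curvature_eq hgnd hJskew ε ξ R0 hR0 R hR, hεa, neg_one_smul,
      Finset.sum_neg_distrib, sub_neg_eq_add, implies_true]
  have hJξ := curvature_sub_curvatureOf_J_xi hgsymm hJ2' hJ12 hJskew hS' hR'
  refine ⟨fun X Y => ?_, fun X Y => ?_, fun X Y => ?_, fun X Y => ?_,
    fun X Y Z hZ hZ0 hZ1 hZ2 => ?_⟩ <;> rw [hRt]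
  · exact curvature_sub_curvatureOf_xi hgsymm hJ2' hJ12 hJskew hS' hR' X Y
  · exact hJξ 0 X Y
  · exact hJξ 1 X Y
  · exact hJξ 2 X Y
  · refine curvature_sub_curvatureOf_of_orthogonal hgsymm hJ2' hJ12 hJskew hS' hR' X Y Z hZ ?_
    intro a
    fin_cases a <;> assumption

/-- action of `R̃ = R − R^S` on `ξ`, `J_aξ` and on `(Hξ)^⊥`
in the pseudo-quaternion Kähler case (δ = −1).  Indices `0,1,2` of `Fin 3`
correspond to `1,2,3` of the paper. -/
theorem stmt_11
    {V : Type*} [AddCommGroup V] [Module ℝ V] [FiniteDimensional ℝ V]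
    (ε : Fin 3 → ℝ) (hε : ε = ![-1, -1, -1])
    (g : V →ₗ[ℝ] V →ₗ[ℝ] ℝ)
    (hgsymm : ∀ X Y : V, g X Y = g Y X)
    (hgnd : ∀ X : V, (∀ Y : V, g X Y = 0) → X = 0)
    (J : Fin 3 → V →ₗ[ℝ] V)
    (hJ2 : ∀ (a : Fin 3) (X : V), J a (J a X) = ε a • X)
    (hJ12 : ∀ X : V, J 0 (J 1 X) = J 2 X)
    (hJskew : ∀ (a : Fin 3) (X Y : V), g (J a X) Y = - g X (J a Y))
    (ξ : V) (S : V → V → V)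
    (hS : ∀ X Y : V, S X Y =
      g X Y • ξ - g Y ξ • X
        - ∑ a : Fin 3, ε a • (g (J a Y) ξ • J a X - g X (J a Y) • J a ξ))
    (R0 : V → V → V → V → ℝ)
    (hR0 : ∀ X Y Z W : V, R0 X Y Z W =
      g X Z * g Y W - g Y Z * g X W
        - ∑ a : Fin 3, ε a * (g (J a X) Z * g (J a Y) W
            - g (J a Y) Z * g (J a X) W + 2 * g X (J a Y) * g Z (J a W)))
    (R : V → V → V → V)
    (hR : ∀ X Y W U : V, g (R X Y W) U = -(g ξ ξ) * R0 X Y W U)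
    (Rt : V → V → V → V)
    (hRt : ∀ X Y W : V, Rt X Y W =
      R X Y W - (S (S X Y - S Y X) W - S X (S Y W) + S Y (S X W))) :
    (∀ X Y : V, Rt X Y ξ = 0) ∧
    (∀ X Y : V, Rt X Y (J 0 ξ)
        = (-(4 * g ξ ξ)) • (g (J 2 X) Y • J 1 ξ - g (J 1 X) Y • J 2 ξ)) ∧
    (∀ X Y : V, Rt X Y (J 1 ξ)
        = (-(4 * g ξ ξ)) • (g (J 0 X) Y • J 2 ξ - g (J 2 X) Y • J 0 ξ)) ∧
    (∀ X Y : V, Rt X Y (J 2 ξ)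
        = (-(4 * g ξ ξ)) • (g (J 1 X) Y • J 0 ξ - g (J 0 X) Y • J 1 ξ)) ∧
    (∀ X Y Z : V, g Z ξ = 0 → g Z (J 0 ξ) = 0 → g Z (J 1 ξ) = 0 →
      g Z (J 2 ξ) = 0 →
      Rt X Y Z = (-(2 * g ξ ξ)) • ∑ a : Fin 3, g (J a X) Y • J a Z) :=
  stmt_11_general ε hε g hgsymm hgnd J hJ2 hJ12 hJskew ξ S hS R0 hR0 R hR Rt hRt
end

section
/- Let R : V⁴ → ℝ be a multilinear map satisfying the algebraic curvature symmetries: R(X,Y,Z,W) = −R(Y,X,Z,W) = −R(X,Y,W,Z), R(X,Y,Z,W) = R(Z,W,X,Y), and the first Bianchi identity R(X,Y,Z,W) + R(Y,Z,X,W) + R(Z,X,Y,W) = 0. Assume R is of type 𝔰𝔭^ε(n), i.e. R(J_aX,Y,Z,W) + R(X,J_aY,Z,W) = 0 for a = 1,2,3 and all X,Y,Z,W. Let ξ ∈ V with g(ξ,ξ) ≠ 0 and set θ = g(ξ,·). If for all W, U ∈ V the cyclic sums over (X,Y,Z) satisfy θ(X)R(Y,Z,W,U) + θ(Y)R(Z,X,W,U)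 + θ(Z)R(X,Y,W,U) = 0 and, for each a = 1,2,3, θ(J_aX)R(Y,Z,W,U) + θ(J_aY)R(Z,X,W,U) + θ(J_aZ)R(X,Y,W,U) = 0, then R = 0. -/
/-!
Put `θ = g ξ` and `c = θ ξ ≠ 0`. Skewness of each `J_a` gives `θ (J_a ξ) = 0`, while
`θ (J_a J_a ξ) = ε_a c` and `θ (J₁ J₂ ξ) = θ (J₃ ξ) = 0`. The `J₁`-cyclic condition on
`(J₂ ξ, ξ, J₁ ξ)` then leaves only `-c R(J₂ ξ, ξ) = 0`; with this, the `J₂`-cyclic condition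
on `(ξ, Y, J₂ ξ)` leaves `δ c R(ξ, Y) = 0`. So `ξ` lies in the kernel of `R`, and the plain
cyclic condition on `(X, Y, ξ)` reduces to `c R(X, Y) = 0`.
-/

open CharZero in
theorem LinearMap.apply_apply_self_eq_zero_of_skew {K M : Type*} [CommRing K]
    [NoZeroDivisors K] [CharZero K] [AddCommGroup M] [Module K M]
    {g : M →ₗ[K] M →ₗ[K] K} (hg : ∀ X Y, g X Y = g Y X) {A : M →ₗ[K] M}
    (hA : ∀ X Y, g (A X) Y = - g X (A Y)) (X : M) : g X (A X) = 0 :=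
  eq_neg_self_iff.mp (by rw [← hA, hg])

theorem stmt_12_general
    {V : Type*} [AddCommGroup V] [Module ℝ V]
    (δ : ℝ) (hδ : δ = -1 ∨ δ = 1)
    (ε : Fin 3 → ℝ) (hε : ε = ![-1, δ, δ])
    (g : V →ₗ[ℝ] V →ₗ[ℝ] ℝ)
    (hgsymm : ∀ X Y : V, g X Y = g Y X)
    (J : Fin 3 → V →ₗ[ℝ] V)
    (hJ2 : ∀ (a : Fin 3) (X : V), J a (J a X) = ε a • X)
    (hJ12 : ∀ X : V, J 0 (J 1 X) = J 2 X)
    (hJskew : ∀ (a : Fin 3) (X Y : V), g (J a X) Y = - g X (J a Y))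
    (R : V →ₗ[ℝ] V →ₗ[ℝ] V →ₗ[ℝ] V →ₗ[ℝ] ℝ)
    (hR1 : ∀ X Y Z W : V, R X Y Z W = - R Y X Z W)
    (ξ : V) (hξ : g ξ ξ ≠ 0)
    (hcyc : ∀ X Y Z W U : V,
      g ξ X * R Y Z W U + g ξ Y * R Z X W U + g ξ Z * R X Y W U = 0)
    (hcycJ : ∀ (a : Fin 3) (X Y Z W U : V),
      g ξ (J a X) * R Y Z W U + g ξ (J a Y) * R Z X W U
        + g ξ (J a Z) * R X Y W U = 0) :
    ∀ X Y Z W : V, R X Y Z W = 0 := by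
  have hθJ (a : Fin 3) : g ξ (J a ξ) = 0 :=
    LinearMap.apply_apply_self_eq_zero_of_skew hgsymm (hJskew a) ξ
  have hθJJ (a : Fin 3) : g ξ (J a (J a ξ)) = ε a * g ξ ξ := by
    rw [hJ2, map_smul, smul_eq_mul]
  have hδc : δ * g ξ ξ ≠ 0 := mul_ne_zero (by rcases hδ with rfl | rfl <;> norm_num) hξ
  have hRJξ (W U : V) : R (J 1 ξ) ξ W U = 0 := by
    have h := hcycJ 0 (J 1 ξ) ξ (J 0 ξ) W U
    rw [hJ12, hθJ, hθJ, hθJJ, hε] at h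
    simpa [hξ] using h
  have hRξ (Y W U : V) : R ξ Y W U = 0 := by
    have h := hcycJ 1 ξ Y (J 1 ξ) W U
    rw [hθJ, hθJJ, hRJξ, hε] at h
    simpa [hδc] using h
  intro X Y W U
  have h := hcyc X Y ξ W U
  rw [hR1 Y, hRξ, hRξ] at h
  simpa [hξ] using h

/-- an algebraic curvature tensor of type `𝔰𝔭^ε(n)` satisfying
the two wedge (cyclic) conditions with a non-null vector `ξ` must vanish. -/
theorem stmt_12
    {V : Type*} [AddCommGroup V] [Module ℝ V] [FiniteDimensional ℝ V]
    (n : ℕ) (hn : 2 ≤ n) (hdim : Module.finrank ℝ V = 4 * n)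
    (δ : ℝ) (hδ : δ = -1 ∨ δ = 1)
    (ε : Fin 3 → ℝ) (hε : ε = ![-1, δ, δ])
    (g : V →ₗ[ℝ] V →ₗ[ℝ] ℝ)
    (hgsymm : ∀ X Y : V, g X Y = g Y X)
    (hgnd : ∀ X : V, (∀ Y : V, g X Y = 0) → X = 0)
    (J : Fin 3 → V →ₗ[ℝ] V)
    (hJ2 : ∀ (a : Fin 3) (X : V), J a (J a X) = ε a • X)
    (hJ12 : ∀ X : V, J 0 (J 1 X) = J 2 X)
    (hJskew : ∀ (a : Fin 3) (X Y : V), g (J a X) Y = - g X (J a Y))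
    (R : V →ₗ[ℝ] V →ₗ[ℝ] V →ₗ[ℝ] V →ₗ[ℝ] ℝ)
    (hR1 : ∀ X Y Z W : V, R X Y Z W = - R Y X Z W)
    (hR2 : ∀ X Y Z W : V, R X Y Z W = - R X Y W Z)
    (hR3 : ∀ X Y Z W : V, R X Y Z W = R Z W X Y)
    (hBianchi : ∀ X Y Z W : V, R X Y Z W + R Y Z X W + R Z X Y W = 0)
    (hsp : ∀ (a : Fin 3) (X Y Z W : V),
      R (J a X) Y Z W + R X (J a Y) Z W = 0)
    (ξ : V) (hξ : g ξ ξ ≠ 0)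
    (hcyc : ∀ X Y Z W U : V,
      g ξ X * R Y Z W U + g ξ Y * R Z X W U + g ξ Z * R X Y W U = 0)
    (hcycJ : ∀ (a : Fin 3) (X Y Z W U : V),
      g ξ (J a X) * R Y Z W U + g ξ (J a Y) * R Z X W U
        + g ξ (J a Z) * R X Y W U = 0) :
    ∀ X Y Z W : V, R X Y Z W = 0 :=
  stmt_12_general δ hδ ε hε g hgsymm J hJ2 hJ12 hJskew R hR1 ξ hξ hcyc hcycJ
end

section
/- Let V be a real vector space, g a nondegenerate symmetric bilinear form on V, and ξ ∈ V with g(ξ,ξ) ≠ 0; set θ = g(ξ,·). Let A : V⁴ → ℝ be a multilinear map that is antisymmetric in its first two arguments, satisfies the pair symmetry A(X,Y,Z,W) = A(Z,W,X,Y), satisfies A(Y,Z,ξ,W) = 0 for all Y, Z, W ∈ V, and satisfies, for all W, U ∈ V, the cyclic identity θ(X)A(Y,Z,W,U) + θ(Y)A(Z,X,W,U) + θ(Z)A(X,Y,W,U) = 0. Then A = 0. -/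
theorem stmt_13_general
    {V : Type*} [AddCommGroup V] [Module ℝ V]
    (g : V →ₗ[ℝ] V →ₗ[ℝ] ℝ)
    (ξ : V) (hξ : g ξ ξ ≠ 0)
    (A : V →ₗ[ℝ] V →ₗ[ℝ] V →ₗ[ℝ] V →ₗ[ℝ] ℝ)
    (hA1 : ∀ X Y Z W : V, A X Y Z W = - A Y X Z W)
    (hA2 : ∀ X Y Z W : V, A X Y Z W = A Z W X Y)
    (hA3 : ∀ Y Z W : V, A Y Z ξ W = 0)
    (hcyc : ∀ X Y Z W U : V,
      g ξ X * A Y Z W U + g ξ Y * A Z X W U + g ξ Z * A X Y W U = 0) :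
    ∀ X Y Z W : V, A X Y Z W = 0 := by
  intro X Y Z W
  have hξ_first : A ξ X Z W = 0 := by rw [hA2, hA3]
  have hξ_second : A Y ξ Z W = 0 := by rw [hA1, hA2, hA3, neg_zero]
  -- The cyclic identity at `ξ` leaves only the term `g(ξ,ξ) A(X,Y,Z,W)`.
  have hcyc_ξ : g ξ ξ * A X Y Z W = 0 := by
    simpa [hξ_first, hξ_second] using hcyc ξ X Y Z W
  exact (mul_eq_zero.mp hcyc_ξ).resolve_left hξ

/-- the concluding algebraic step of the constant holomorphic
curvature theorem: a pair-symmetric tensor, antisymmetric in its first two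
arguments, vanishing whenever `ξ` occupies the third slot and satisfying the
cyclic identity with the non-null vector `ξ`, must vanish. -/
theorem stmt_13
    {V : Type*} [AddCommGroup V] [Module ℝ V]
    (g : V →ₗ[ℝ] V →ₗ[ℝ] ℝ)
    (hgsymm : ∀ X Y : V, g X Y = g Y X)
    (hgnd : ∀ X : V, (∀ Y : V, g X Y = 0) → X = 0)
    (ξ : V) (hξ : g ξ ξ ≠ 0)
    (A : V →ₗ[ℝ] V →ₗ[ℝ] V →ₗ[ℝ] V →ₗ[ℝ] ℝ)
    (hA1 : ∀ X Y Z W : V, A X Y Z W = - A Y X Z W)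
    (hA2 : ∀ X Y Z W : V, A X Y Z W = A Z W X Y)
    (hA3 : ∀ Y Z W : V, A Y Z ξ W = 0)
    (hcyc : ∀ X Y Z W U : V,
      g ξ X * A Y Z W U + g ξ Y * A Z X W U + g ξ Z * A X Y W U = 0) :
    ∀ X Y Z W : V, A X Y Z W = 0 :=
  stmt_13_general g ξ hξ A hA1 hA2 hA3 hcyc
end

section
/- Let A : V → V be a linear map that is skew with respect to g, i.e. g(AX,Y) + g(X,AY) = 0 for all X, Y, and such that for each a = 1,2,3 the commutator A∘J_a − J_a∘A lies in the real span of {J₁, J₂, J₃} (i.e. A ∈ 𝔰𝔭^ε(n) + 𝔰𝔭^ε(1)). Then A annihilates R⁰ as a derivation: for all X, Y, Z, W ∈ V, R⁰(AX,Y,Z,W) + R⁰(X,AY,Z,W) + R⁰(X,Y,AZ,W) + R⁰(X,Y,Z,AW) = 0. -/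
/-!
Write `[A, J_a] = ∑_c C_ac J_c`. Distinct `J_a` anticommute, so the trace form is diagonal on them,
`tr(J_a J_b) = ε_a n δ_ab`, while `tr([A, J_a] J_b) = tr(A [J_a, J_b])` is antisymmetric in `a, b`;
as `ε_a² = 1`, the matrix `(ε_a C_ab)` is antisymmetric. With `ω_a = g(J_a ·, ·)`, the derivation
`A·` kills the `g`-part of `R⁰` because `A` is `g`-skew, and sends `ω_a` to `-∑_c C_ac ω_c`. By the
Leibniz rule it sends `∑_a ε_a ω_a ⊙ ω_a` to the contraction of the antisymmetric `(ε_a C_ac)` with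
a tensor symmetric in `a, c`, which vanishes.
-/

open Module

theorem anticomm_of_mul_self_eq {k R : Type*} [Field k] [Ring R] [Algebra k R] {δ : k}
    (hδ : δ ≠ 0) {I J : R} (hI : I * I = -1) (hJ : J * J = δ • 1)
    (hIJ : I * J * (I * J) = δ • 1) : J * I = -(I * J) := by
  have hJIJ : J * I * J = -(δ • I) := by
    calc J * I * J = -(I * I) * (J * I * J) := by rw [hI, neg_neg, one_mul]
      _ = -(I * (I * J * (I * J))) := by noncomm_ring
      _ = -(δ • I) := by rw [hIJ, mul_smul_comm, mul_one]
  apply smul_right_injective R hδ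
  calc δ • (J * I) = J * I * (J * J) := by rw [hJ, mul_smul_comm, mul_one]
    _ = J * I * J * J := by noncomm_ring
    _ = δ • -(I * J) := by rw [hJIJ, neg_mul, smul_mul_assoc, smul_neg]

theorem epsQuaternion_anticomm {k R : Type*} [Field k] [Ring R] [Algebra k R] {δ : k}
    (hδ : δ ≠ 0) {J : Fin 3 → R} (hsq : ∀ a, J a * J a = ![-1, δ, δ] a • 1)
    (h01 : J 0 * J 1 = J 2) {a b : Fin 3} (hab : a ≠ b) : J a * J b = -(J b * J a) := by
  have h0 : J 0 * J 0 = -1 := by simpa using hsq 0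
  have h1 : J 1 * J 1 = δ • 1 := by simpa using hsq 1
  have h2 : J 2 * J 2 = δ • 1 := by simpa using hsq 2
  have h10 : J 1 * J 0 = -(J 0 * J 1) := anticomm_of_mul_self_eq hδ h0 h1 (by rw [h01, h2])
  have h02 : J 0 * J 2 = -(J 2 * J 0) := by
    rw [← h01, ← mul_assoc, h0, mul_assoc, h10, mul_neg, ← mul_assoc, h0, neg_neg]
  have h12 : J 1 * J 2 = -(J 2 * J 1) := by
    rw [← h01, ← mul_assoc, h10, neg_mul, mul_assoc, h1]
  fin_cases a <;> fin_cases b <;> simp_all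

theorem trace_mul_eq_ite {V ι : Type*} [AddCommGroup V] [Module ℝ V] [FiniteDimensional ℝ V]
    [DecidableEq ι]
    {J : ι → End ℝ V} {ε : ι → ℝ} (hsq : ∀ a, J a * J a = ε a • 1)
    (hanti : ∀ a b, a ≠ b → J a * J b = -(J b * J a)) (a b : ι) :
    LinearMap.trace ℝ V (J a * J b) = if a = b then ε a * finrank ℝ V else 0 := by
  split_ifs with hab
  · rw [hab, hsq, map_smul, LinearMap.trace_one, smul_eq_mul]
  · have hcomm := LinearMap.trace_mul_comm ℝ (J a) (J b)
    rw [hanti a b hab, map_neg] at hcomm ⊢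
    linarith

theorem commutator_coeff_antisymm {R M ι : Type*} [CommRing R] [AddCommGroup M] [Module R M]
    [Fintype ι] [DecidableEq ι] {J : ι → End R M} {μ : ι → R}
    (htr : ∀ a b, LinearMap.trace R M (J a * J b) = if a = b then μ a else 0)
    {A : End R M} {C : ι → ι → R} (hC : ∀ a, A * J a - J a * A = ∑ c, C a c • J c) (a b : ι) :
    C a b * μ b + C b a * μ a = 0 := by
  have key : ∀ a b, C a b * μ b = LinearMap.trace R M (A * (J a * J b - J b * J a)) := by
    intro a b
    calc C a b * μ b = LinearMap.trace R M ((A * J a - J a * A) * J b) := by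
          simp [hC, Finset.sum_mul, htr]
      _ = LinearMap.trace R M (A * J a * J b) - LinearMap.trace R M (J a * A * J b) := by
          rw [sub_mul, map_sub]
      _ = _ := by
          rw [LinearMap.trace_mul_cycle R (J a) A (J b), LinearMap.trace_mul_comm R (J b * J a) A,
            mul_sub, map_sub, mul_assoc]
  rw [key, key, ← map_add, ← mul_add, sub_add_sub_cancel, sub_self, mul_zero, map_zero]

theorem epsQuaternion_commutator_coeff_antisymm {V : Type*} [AddCommGroup V] [Module ℝ V]
    [FiniteDimensional ℝ V] (hV : finrank ℝ V ≠ 0) {δ : ℝ} (hδ : δ = -1 ∨ δ = 1)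
    {J : Fin 3 → End ℝ V} (hsq : ∀ a, J a * J a = ![-1, δ, δ] a • 1) (h01 : J 0 * J 1 = J 2)
    {A : End ℝ V} {C : Fin 3 → Fin 3 → ℝ} (hC : ∀ a, A * J a - J a * A = ∑ c, C a c • J c)
    (a c : Fin 3) : ![-1, δ, δ] a * C a c + ![-1, δ, δ] c * C c a = 0 := by
  set ε : Fin 3 → ℝ := ![-1, δ, δ]
  have hδ0 : δ ≠ 0 := by rcases hδ with rfl | rfl <;> norm_num
  have hε_sq : ∀ a, ε a * ε a = 1 := by
    intro a; fin_cases a <;> rcases hδ with rfl | rfl <;> norm_num [ε]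
  have htr := trace_mul_eq_ite hsq fun a b => epsQuaternion_anticomm hδ0 hsq h01
  have hn : (finrank ℝ V : ℝ) ≠ 0 := Nat.cast_ne_zero.mpr hV
  have htrace_rel : ε c * C a c + ε a * C c a = 0 := by
    apply mul_left_cancel₀ hn
    linear_combination commutator_coeff_antisymm htr hC a c
  linear_combination (ε a * ε c) * htrace_rel - (ε a * C a c) * hε_sq c - (ε c * C c a) * hε_sq a

section Tensor

variable {V : Type*}

def derivAct₂ (A : V → V) (α : V → V → ℝ) (P Q : V) : ℝ :=
  α (A P) Q + α P (A Q)

def derivAct₄ (A : V → V) : (V → V → V → V → ℝ) →ₗ[ℝ] V → V → V → V → ℝ where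
  toFun T X Y Z W := T (A X) Y Z W + T X (A Y) Z W + T X Y (A Z) W + T X Y Z (A W)
  map_add' T T' := by
    ext X Y Z W
    simp only [Pi.add_apply]
    ring
  map_smul' c T := by
    ext X Y Z W
    simp only [Pi.smul_apply, smul_eq_mul, RingHom.id_apply]
    ring

def quatCurvTerm (α β : V → V → ℝ) (X Y Z W : V) : ℝ :=
  α X Z * β Y W - α Y Z * β X W + 2 * α X Y * β Z W

theorem derivAct₄_quatCurvTerm (A : V → V) (α β : V → V → ℝ) :
    derivAct₄ A (quatCurvTerm α β) =
      quatCurvTerm (derivAct₂ A α) β + quatCurvTerm α (derivAct₂ A β) := by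
  ext X Y Z W
  simp only [derivAct₄, derivAct₂, quatCurvTerm, LinearMap.coe_mk, AddHom.coe_mk, Pi.add_apply]
  ring

theorem quatCurvTerm_sum_smul_left {ι : Type*} (s : Finset ι) (k : ι → ℝ) (α : ι → V → V → ℝ)
    (β : V → V → ℝ) :
    quatCurvTerm (fun P Q => ∑ c ∈ s, k c * α c P Q) β =
      ∑ c ∈ s, k c • quatCurvTerm (α c) β := by
  ext X Y Z W
  simp only [quatCurvTerm, Finset.sum_apply, Pi.smul_apply, smul_eq_mul, Finset.sum_mul,
    Finset.mul_sum, ← Finset.sum_sub_distrib, ← Finset.sum_add_distrib]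
  exact Finset.sum_congr rfl fun c _ => by ring

theorem quatCurvTerm_sum_smul_right {ι : Type*} (s : Finset ι) (k : ι → ℝ) (α : V → V → ℝ)
    (β : ι → V → V → ℝ) :
    quatCurvTerm α (fun P Q => ∑ c ∈ s, k c * β c P Q) =
      ∑ c ∈ s, k c • quatCurvTerm α (β c) := by
  ext X Y Z W
  simp only [quatCurvTerm, Finset.sum_apply, Pi.smul_apply, smul_eq_mul, Finset.mul_sum,
    ← Finset.sum_sub_distrib, ← Finset.sum_add_distrib]
  exact Finset.sum_congr rfl fun c _ => by ring

theorem Finset.sum_sum_smul_eq_zero_of_antisymm {ι M : Type*} [Fintype ι] [AddCommGroup M]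
    [Module ℝ M] {m : ι → ι → ℝ} {S : ι → ι → M} (hm : ∀ a c, m a c + m c a = 0)
    (hS : ∀ a c, S a c = S c a) : ∑ a, ∑ c, m a c • S a c = 0 := by
  have hneg : ∑ a, ∑ c, m a c • S a c = -∑ a, ∑ c, m a c • S a c := by
    calc ∑ a, ∑ c, m a c • S a c = ∑ c, ∑ a, m a c • S a c := Finset.sum_comm
      _ = -∑ a, ∑ c, m a c • S a c := by
          simp only [← Finset.sum_neg_distrib, ← neg_smul]
          exact Finset.sum_congr rfl fun c _ => Finset.sum_congr rfl fun a _ => by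
            rw [hS, eq_neg_of_add_eq_zero_left (hm a c)]
  have htwo : (2 : ℝ) • ∑ a, ∑ c, m a c • S a c = 0 := by
    rw [two_smul]
    nth_rewrite 2 [hneg]
    exact add_neg_cancel _
  exact (smul_eq_zero.mp htwo).resolve_left two_ne_zero

theorem derivAct₄_sum_quatCurvTerm_eq_zero {ι : Type*} [Fintype ι] (A : V → V) (ε : ι → ℝ)
    (ω : ι → V → V → ℝ) (C : ι → ι → ℝ)
    (hω : ∀ a, derivAct₂ A (ω a) = fun P Q => ∑ c, C a c * ω c P Q)
    (hC : ∀ a c, ε a * C a c + ε c * C c a = 0) :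
    derivAct₄ A (∑ a, ε a • quatCurvTerm (ω a) (ω a)) = 0 := by
  calc derivAct₄ A (∑ a, ε a • quatCurvTerm (ω a) (ω a))
      = ∑ a, ∑ c, (ε a * C a c) • (quatCurvTerm (ω c) (ω a) + quatCurvTerm (ω a) (ω c)) := by
        simp only [map_sum, map_smul, derivAct₄_quatCurvTerm, hω, quatCurvTerm_sum_smul_left,
          quatCurvTerm_sum_smul_right, ← Finset.sum_add_distrib, Finset.smul_sum, smul_add,
          mul_smul]
    _ = 0 := Finset.sum_sum_smul_eq_zero_of_antisymm hC fun a c => add_comm _ _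

end Tensor

section Metric

variable {V : Type*} [AddCommGroup V] [Module ℝ V] (g : V →ₗ[ℝ] V →ₗ[ℝ] ℝ) {A : V →ₗ[ℝ] V}

theorem derivAct₄_metricTerm_eq_zero (hA : ∀ X Y, g (A X) Y + g X (A Y) = 0) :
    derivAct₄ A (fun X Y Z W => g X Z * g Y W - g Y Z * g X W) = 0 := by
  have hA' : ∀ X Y, g (A X) Y = -g X (A Y) := fun X Y => eq_neg_of_add_eq_zero_left (hA X Y)
  ext X Y Z W
  simp only [derivAct₄, LinearMap.coe_mk, AddHom.coe_mk, hA', Pi.zero_apply]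
  ring

theorem derivAct₂_comp_eq_neg_commutator (hA : ∀ X Y, g (A X) Y + g X (A Y) = 0) (T : End ℝ V) :
    derivAct₂ A (fun P Q => g (T P) Q) = fun P Q => -g ((A * T - T * A) P) Q := by
  ext P Q
  simp only [derivAct₂, LinearMap.sub_apply, Module.End.mul_apply, map_sub, LinearMap.sub_apply]
  linarith [hA (T P) Q]

end Metric

theorem stmt_15_general
    {V : Type*} [AddCommGroup V] [Module ℝ V] [FiniteDimensional ℝ V]
    (δ : ℝ) (hδ : δ = -1 ∨ δ = 1)
    (ε : Fin 3 → ℝ) (hε : ε = ![-1, δ, δ])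
    (g : V →ₗ[ℝ] V →ₗ[ℝ] ℝ)
    (J : Fin 3 → V →ₗ[ℝ] V)
    (hJ2 : ∀ (a : Fin 3) (X : V), J a (J a X) = ε a • X)
    (hJ12 : ∀ X : V, J 0 (J 1 X) = J 2 X)
    (hJskew : ∀ (a : Fin 3) (X Y : V), g (J a X) Y = - g X (J a Y))
    (R0 : V → V → V → V → ℝ)
    (hR0 : ∀ X Y Z W : V, R0 X Y Z W =
      g X Z * g Y W - g Y Z * g X W
        - ∑ a : Fin 3, ε a * (g (J a X) Z * g (J a Y) W
            - g (J a Y) Z * g (J a X) W + 2 * g X (J a Y) * g Z (J a W)))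
    (A : V →ₗ[ℝ] V)
    (hAskew : ∀ X Y : V, g (A X) Y + g X (A Y) = 0)
    (hAcomm : ∀ a : Fin 3,
      A ∘ₗ J a - J a ∘ₗ A ∈ Submodule.span ℝ ({J 0, J 1, J 2} : Set (V →ₗ[ℝ] V))) :
    ∀ X Y Z W : V,
      R0 (A X) Y Z W + R0 X (A Y) Z W + R0 X Y (A Z) W + R0 X Y Z (A W) = 0 := by
  subst hε
  rcases eq_or_ne (finrank ℝ V) 0 with hn | hn
  · have := Module.finrank_zero_iff.mp hn
    intro X Y Z W
    simp [hR0, Subsingleton.elim _ (0 : V)]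
  obtain ⟨C, hC⟩ : ∃ C : Fin 3 → Fin 3 → ℝ, ∀ a, A * J a - J a * A = ∑ c, C a c • J c := by
    have hrange : ({J 0, J 1, J 2} : Set (V →ₗ[ℝ] V)) = Set.range J := by
      ext; simp [Fin.exists_fin_succ, eq_comm]
    choose C hC using fun a => (Submodule.mem_span_range_iff_exists_fun ℝ).mp (hrange ▸ hAcomm a)
    exact ⟨C, fun a => (hC a).symm⟩
  have hCskew := epsQuaternion_commutator_coeff_antisymm hn hδ (fun a => LinearMap.ext (hJ2 a))
    (LinearMap.ext hJ12) hC
  have hω : ∀ a, derivAct₂ A (fun P Q => g (J a P) Q) = fun P Q => ∑ c, -C a c * g (J c P) Q := by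
    intro a
    rw [derivAct₂_comp_eq_neg_commutator g hAskew, hC]
    ext P Q
    simp [LinearMap.sum_apply]
  have hR0' : R0 = (fun X Y Z W => g X Z * g Y W - g Y Z * g X W) -
      ∑ a, ![-1, δ, δ] a • quatCurvTerm (fun P Q => g (J a P) Q) (fun P Q => g (J a P) Q) := by
    have hJ' : ∀ a X Y, g X (J a Y) = -g (J a X) Y := fun a X Y => by rw [hJskew, neg_neg]
    ext X Y Z W
    simp only [hR0, hJ', quatCurvTerm, Pi.sub_apply, Finset.sum_apply, Pi.smul_apply, smul_eq_mul,
      mul_neg, neg_mul, neg_neg]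
  intro X Y Z W
  change derivAct₄ A R0 X Y Z W = 0
  rw [hR0', map_sub, derivAct₄_metricTerm_eq_zero g hAskew,
    derivAct₄_sum_quatCurvTerm_eq_zero A _ _ _ hω fun a c => by linear_combination -hCskew a c]
  simp

/-- any `g`-skew endomorphism `A` whose commutator with each
`J_a` lies in the span of `{J₁, J₂, J₃}` (i.e. `A ∈ 𝔰𝔭^ε(n) + 𝔰𝔭^ε(1)`)
annihilates the model tensor `R⁰` as a derivation. -/
theorem stmt_15
    {V : Type*} [AddCommGroup V] [Module ℝ V] [FiniteDimensional ℝ V]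
    (δ : ℝ) (hδ : δ = -1 ∨ δ = 1)
    (ε : Fin 3 → ℝ) (hε : ε = ![-1, δ, δ])
    (g : V →ₗ[ℝ] V →ₗ[ℝ] ℝ)
    (hgsymm : ∀ X Y : V, g X Y = g Y X)
    (hgnd : ∀ X : V, (∀ Y : V, g X Y = 0) → X = 0)
    (J : Fin 3 → V →ₗ[ℝ] V)
    (hJ2 : ∀ (a : Fin 3) (X : V), J a (J a X) = ε a • X)
    (hJ12 : ∀ X : V, J 0 (J 1 X) = J 2 X)
    (hJskew : ∀ (a : Fin 3) (X Y : V), g (J a X) Y = - g X (J a Y))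
    (R0 : V → V → V → V → ℝ)
    (hR0 : ∀ X Y Z W : V, R0 X Y Z W =
      g X Z * g Y W - g Y Z * g X W
        - ∑ a : Fin 3, ε a * (g (J a X) Z * g (J a Y) W
            - g (J a Y) Z * g (J a X) W + 2 * g X (J a Y) * g Z (J a W)))
    (A : V →ₗ[ℝ] V)
    (hAskew : ∀ X Y : V, g (A X) Y + g X (A Y) = 0)
    (hAcomm : ∀ a : Fin 3,
      A ∘ₗ J a - J a ∘ₗ A ∈ Submodule.span ℝ ({J 0, J 1, J 2} : Set (V →ₗ[ℝ] V))) :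
    ∀ X Y Z W : V,
      R0 (A X) Y Z W + R0 X (A Y) Z W + R0 X Y (A Z) W + R0 X Y Z (A W) = 0 :=
  stmt_15_general δ hδ ε hε g J hJ2 hJ12 hJskew R0 hR0 A hAskew hAcomm
end

section
/- The functions x(t) = tan t and y(t) = 1/cos t are differentiable on the open interval (−π/2, π/2), satisfy x′(t) = y(t)² and y′(t) = x(t)·y(t) for all t ∈ (−π/2, π/2), and satisfy x(0) = 0, y(0) = 1. Moreover, there is no pair of differentiable functions x, y : ℝ → ℝ satisfying x′(t) = y(t)², y′(t) = x(t)·y(t) for all t ∈ ℝ with x(0) = 0 and y(0) = 1. -/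
/-!
Along any solution of `x′ = y²`, `y′ = x·y` the quantity `y² − x²` is conserved, so the
solution through `(0, 1)` satisfies the Riccati equation `x′ = 1 + x²`. Then `arctan ∘ x`
has slope `1`, which is impossible for a solution defined on all of `ℝ` because `arctan`
takes values in `(−π/2, π/2)`. Its maximal solution `x = tan`, `y = sec` blows up at `±π/2`.
-/

open Real

theorem Real.hasDerivAt_inv_cos {t : ℝ} (h : cos t ≠ 0) :
    HasDerivAt (fun s => (cos s)⁻¹) (tan t * (cos t)⁻¹) t := by
  refine ((hasDerivAt_cos t).inv h).congr_deriv ?_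
  rw [tan_eq_sin_div_cos]
  field_simp

theorem sq_sub_sq_eq_of_deriv_eq {u v : ℝ → ℝ} (hu : Differentiable ℝ u)
    (hv : Differentiable ℝ v) (hu' : ∀ t, deriv u t = v t ^ 2)
    (hv' : ∀ t, deriv v t = u t * v t) (t : ℝ) :
    v t ^ 2 - u t ^ 2 = v 0 ^ 2 - u 0 ^ 2 := by
  refine is_const_of_deriv_eq_zero ((hv.pow 2).sub (hu.pow 2)) (fun s => ?_) t 0
  rw [(((hv s).hasDerivAt.pow 2).sub ((hu s).hasDerivAt.pow 2)).deriv, hu' s, hv' s]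
  ring

theorem arctan_comp_eq_of_deriv_eq_one_add_sq {u : ℝ → ℝ} (hu : Differentiable ℝ u)
    (hu' : ∀ t, deriv u t = 1 + u t ^ 2) (t : ℝ) :
    arctan (u t) = arctan (u 0) + t := by
  have hconst : arctan (u t) - t = arctan (u 0) - 0 := by
    refine is_const_of_deriv_eq_zero
      ((differentiable_arctan.comp hu).sub differentiable_id) (fun s => ?_) t 0
    have hpos : 0 < 1 + u s ^ 2 := by positivity
    rw [(((hasDerivAt_arctan (u s)).comp s (hu s).hasDerivAt).sub (hasDerivAt_id s)).deriv,
      hu' s]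
    field_simp
    ring
  linarith

theorem not_differentiable_of_deriv_eq_one_add_sq {u : ℝ → ℝ}
    (hu' : ∀ t, deriv u t = 1 + u t ^ 2) : ¬ Differentiable ℝ u := by
  intro hu
  have h := arctan_comp_eq_of_deriv_eq_one_add_sq hu hu' π
  linarith [arctan_lt_pi_div_two (u π), neg_pi_div_two_lt_arctan (u 0)]

/-- `x = tan`, `y = 1/cos` solve the geodesic system
`x′ = y²`, `y′ = x·y` on `(−π/2, π/2)` with `x(0) = 0`, `y(0) = 1`, and no
globally defined solution on all of `ℝ` has these initial values
(space-like incompleteness). -/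
theorem stmt_16
    (x y : ℝ → ℝ)
    (hx : ∀ t : ℝ, x t = Real.tan t)
    (hy : ∀ t : ℝ, y t = 1 / Real.cos t) :
    (∀ t ∈ Set.Ioo (-(π / 2)) (π / 2),
      HasDerivAt x ((y t) ^ 2) t ∧ HasDerivAt y (x t * y t) t) ∧
    x 0 = 0 ∧ y 0 = 1 ∧
    ¬ ∃ u v : ℝ → ℝ, Differentiable ℝ u ∧ Differentiable ℝ v ∧
      (∀ t : ℝ, deriv u t = (v t) ^ 2) ∧
      (∀ t : ℝ, deriv v t = u t * v t) ∧
      u 0 = 0 ∧ v 0 = 1 := by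
  have hx_eq : x = tan := funext hx
  have hy_eq : y = fun t => (cos t)⁻¹ := funext fun t => (hy t).trans (one_div _)
  subst hx_eq hy_eq
  refine ⟨fun t ht => ?_, tan_zero, by simp, ?_⟩
  · have hcos : cos t ≠ 0 := (cos_pos_of_mem_Ioo ht).ne'
    exact ⟨by simpa [inv_pow] using hasDerivAt_tan hcos, hasDerivAt_inv_cos hcos⟩
  · rintro ⟨u, v, hu, hv, hu', hv', hu0, hv0⟩
    have hriccati : ∀ t, deriv u t = 1 + u t ^ 2 := fun t => by
      have := sq_sub_sq_eq_of_deriv_eq hu hv hu' hv' t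
      rw [hu0, hv0] at this
      linarith [hu' t]
    exact not_differentiable_of_deriv_eq_one_add_sq hriccati hu
end

section
/- The functions x(t) = y(t) = 1/(1 − t) are differentiable on (−∞, 1), satisfy x′(t) = y(t)² and y′(t) = x(t)·y(t) for all t < 1, and satisfy x(0) = y(0) = 1. Moreover, there is no pair of differentiable functions x, y : ℝ → ℝ satisfying x′(t) = y(t)², y′(t) = x(t)·y(t) for all t ∈ ℝ with x(0) = 1 and y(0) = 1. -/
/-!
If `u' = v²`, `v' = u v`, then `w = u - v` satisfies the linear equation `w' = -v w`, so an
integrating factor shows that `w 0 = 0` forces `u = v`. Then `u' = u²` with `u 0 > 0`, so `u` is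
increasing and positive on `[0, ∞)`, where `(u t)⁻¹ + t` has derivative `0`; this constant would
make `(u t)⁻¹ = 0` at `t = (u 0)⁻¹`.
-/

open Real

theorem hasDerivAt_inv_one_sub {t : ℝ} (ht : t ≠ 1) :
    HasDerivAt (fun s : ℝ => (1 - s)⁻¹) ((1 - t)⁻¹ ^ 2) t := by
  have hne : 1 - t ≠ 0 := sub_ne_zero.mpr ht.symm
  refine (((hasDerivAt_id' t).const_sub 1).inv hne).congr_deriv ?_
  field_simp

theorem eq_mul_exp_integral_of_hasDerivAt_mul {w a : ℝ → ℝ} (ha : Continuous a)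
    (hw : ∀ t, HasDerivAt w (a t * w t) t) (t : ℝ) :
    w t = w 0 * exp (∫ s in (0 : ℝ)..t, a s) := by
  set A : ℝ → ℝ := fun t => ∫ s in (0 : ℝ)..t, a s
  have hA : ∀ t, HasDerivAt A (a t) t := fun t =>
    intervalIntegral.integral_hasDerivAt_right (ha.intervalIntegrable 0 t)
      (ha.stronglyMeasurableAtFilter _ _) ha.continuousAt
  have hF : ∀ t, HasDerivAt (fun t => w t * exp (-A t)) 0 t := fun t => by
    refine ((hw t).mul (hA t).neg.exp).congr_deriv ?_
    ring
  have hconst := is_const_of_deriv_eq_zero (fun s => (hF s).differentiableAt)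
    (fun s => (hF s).deriv) t 0
  simp only [A, intervalIntegral.integral_same, neg_zero, exp_zero, mul_one] at hconst
  rw [← hconst, mul_assoc, ← exp_add, neg_add_cancel, exp_zero, mul_one]

theorem eq_of_hasDerivAt_sq_of_hasDerivAt_mul {u v : ℝ → ℝ}
    (hu : ∀ t, HasDerivAt u (v t ^ 2) t) (hv : ∀ t, HasDerivAt v (u t * v t) t)
    (h0 : u 0 = v 0) : u = v := by
  have hw : ∀ t, HasDerivAt (u - v) (-v t * (u - v) t) t := fun t => by
    refine ((hu t).sub (hv t)).congr_deriv ?_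
    simp only [Pi.sub_apply]
    ring
  have hvc : Continuous v := continuous_iff_continuousAt.mpr fun t => (hv t).continuousAt
  funext t
  simpa [h0, sub_eq_zero] using eq_mul_exp_integral_of_hasDerivAt_mul hvc.neg hw t

theorem not_forall_hasDerivAt_sq {u : ℝ → ℝ} (h0 : 0 < u 0) :
    ¬ ∀ t, HasDerivAt u (u t ^ 2) t := by
  intro hu
  have hmono : Monotone u := monotone_of_deriv_nonneg (fun t => (hu t).differentiableAt)
    (fun t => (hu t).deriv ▸ sq_nonneg _)
  have hpos : ∀ t, 0 ≤ t → 0 < u t := fun t ht => h0.trans_le (hmono ht)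
  have hderiv : ∀ t, 0 ≤ t → HasDerivAt (fun t => (u t)⁻¹ + t) 0 t := fun t ht => by
    refine (((hu t).inv (hpos t ht).ne').add (hasDerivAt_id' t)).congr_deriv ?_
    field_simp [(hpos t ht).ne']
    ring
  have hT : 0 ≤ (u 0)⁻¹ := by positivity
  have hconst := constant_of_has_deriv_right_zero (a := 0) (b := (u 0)⁻¹)
    (fun t ht => (hderiv t ht.1).continuousAt.continuousWithinAt)
    (fun t ht => (hderiv t ht.1).hasDerivWithinAt) (u 0)⁻¹ ⟨hT, le_rfl⟩
  simp only [add_zero, add_eq_right, inv_eq_zero] at hconst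
  exact (hpos _ hT).ne' hconst

/-- `x(t) = y(t) = 1/(1−t)` solves the geodesic system
`x′ = y²`, `y′ = x·y` on `(−∞, 1)` with `x(0) = y(0) = 1`, and no globally
defined solution on all of `ℝ` has these initial values
(null incompleteness). -/
theorem stmt_17
    (x y : ℝ → ℝ)
    (hx : ∀ t : ℝ, x t = 1 / (1 - t))
    (hy : ∀ t : ℝ, y t = 1 / (1 - t)) :
    (∀ t ∈ Set.Iio (1 : ℝ),
      HasDerivAt x ((y t) ^ 2) t ∧ HasDerivAt y (x t * y t) t) ∧
    x 0 = 1 ∧ y 0 = 1 ∧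
    ¬ ∃ u v : ℝ → ℝ, Differentiable ℝ u ∧ Differentiable ℝ v ∧
      (∀ t : ℝ, deriv u t = (v t) ^ 2) ∧
      (∀ t : ℝ, deriv v t = u t * v t) ∧
      u 0 = 1 ∧ v 0 = 1 := by
  obtain rfl : x = fun s => (1 - s)⁻¹ := funext fun s => (hx s).trans (one_div _)
  obtain rfl : y = fun s => (1 - s)⁻¹ := funext fun s => (hy s).trans (one_div _)
  refine ⟨fun t ht => ?_, by simp, by simp, ?_⟩
  · have h := hasDerivAt_inv_one_sub (ne_of_lt ht)
    exact ⟨h, by simpa [sq] using h⟩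
  rintro ⟨u, v, hud, hvd, hu', hv', hu0, hv0⟩
  have hu : ∀ t, HasDerivAt u (v t ^ 2) t := fun t => hu' t ▸ (hud t).hasDerivAt
  have hv : ∀ t, HasDerivAt v (u t * v t) t := fun t => hv' t ▸ (hvd t).hasDerivAt
  obtain rfl := eq_of_hasDerivAt_sq_of_hasDerivAt_mul hu hv (hu0.trans hv0.symm)
  exact not_forall_hasDerivAt_sq (hu0 ▸ one_pos) hu
end
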